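/- arXiv:2503.20395 — 9 statements merged into one kernel-verified Lean document; each statement's English description precedes it below -/
import Mathlib

section
/- The real vector space of traceless 4×4 real matrices X that commute with both M(1,0) and M(cos(2π/3), sin(2π/3)) has dimension 3; explicitly, it equals the space of matrices with entries x₁ in positions (1,2) and (2,4), x₂ in positions (1,3) and (3,4), x₃ in position (1,4), and zero elsewhere. -/
open Matrix Real

/-- The matrix `M(x,y)` from the `C₀`-type generalized cusp. -/
noncomputable def Mcusp (x y : ℝ) : Matrix (Fin 4) (Fin 4) ℝ :=
  !![1, x, y, (x ^ 2 + y ^ 2) / 2;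
     0, 1, 0, x;
     0, 0, 1, y;
     0, 0, 0, 1]

/-- The space of traceless `4 × 4` real matrices commuting with every element of `S`. -/
def tracelessCommutant (S : Set (Matrix (Fin 4) (Fin 4) ℝ)) :
    Submodule ℝ (Matrix (Fin 4) (Fin 4) ℝ) where
  carrier := {X | X.trace = 0 ∧ ∀ A ∈ S, X * A = A * X}
  add_mem' := by
    rintro X Y ⟨hX1, hX2⟩ ⟨hY1, hY2⟩
    refine ⟨by simp [trace_add, hX1, hY1], fun A hA => ?_⟩
    rw [add_mul, mul_add, hX2 A hA, hY2 A hA]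
  zero_mem' := ⟨by simp, fun A hA => by simp⟩
  smul_mem' := by
    rintro c X ⟨hX1, hX2⟩
    refine ⟨by simp [hX1], fun A hA => ?_⟩
    rw [smul_mul_assoc, mul_smul_comm, hX2 A hA]

/-! `M(x,y) = exp N(x,y)` for the nilpotent matrix `N(x,y) = cuspLog x y`, with `N³ = 0`, so
`M = 1 + N + N²/2` and `N = (M - 1) - (M - 1)²/2`: a matrix commutes with `M(x,y)` iff it commutes
with `N(x,y)`. As `N` is linear in `(x,y)`, commuting with `N` at two linearly independent points
such as `(1,0)` and `(cos(2π/3), sin(2π/3))` amounts to commuting with `N(1,0)` and `N(0,1)`,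
and a direct entrywise computation identifies the traceless commutant of these two. -/

def cuspLog (x y : ℝ) : Matrix (Fin 4) (Fin 4) ℝ :=
  !![0, x, y, 0;
     0, 0, 0, x;
     0, 0, 0, y;
     0, 0, 0, 0]

theorem Mcusp_eq_one_add_cuspLog (x y : ℝ) :
    Mcusp x y = 1 + cuspLog x y + (1 / 2 : ℝ) • cuspLog x y ^ 2 := by
  ext i j
  fin_cases i <;> fin_cases j <;> simp [Mcusp, cuspLog, sq, one_apply]
  ring

theorem cuspLog_eq_Mcusp (x y : ℝ) :
    cuspLog x y = (Mcusp x y - 1) - (1 / 2 : ℝ) • (Mcusp x y - 1) ^ 2 := by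
  ext i j
  fin_cases i <;> fin_cases j <;> simp [Mcusp, cuspLog, sq, one_apply, mul_apply, Fin.sum_univ_four]
  ring

theorem commute_Mcusp_iff {X : Matrix (Fin 4) (Fin 4) ℝ} {x y : ℝ} :
    Commute X (Mcusp x y) ↔ Commute X (cuspLog x y) := by
  constructor
  · intro h
    have h₁ : Commute X (Mcusp x y - 1) := h.sub_right (Commute.one_right X)
    rw [cuspLog_eq_Mcusp]
    exact h₁.sub_right ((h₁.pow_right 2).smul_right _)
  · intro h
    rw [Mcusp_eq_one_add_cuspLog]
    exact ((Commute.one_right X).add_right h).add_right ((h.pow_right 2).smul_right _)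

theorem cuspLog_eq_smul_add_smul (x y : ℝ) :
    cuspLog x y = x • cuspLog 1 0 + y • cuspLog 0 1 := by
  ext i j
  fin_cases i <;> fin_cases j <;> simp [cuspLog]

theorem commute_cuspLog_pair_iff {X : Matrix (Fin 4) (Fin 4) ℝ} {x y x' y' : ℝ}
    (hd : x * y' - x' * y ≠ 0) :
    Commute X (cuspLog x y) ∧ Commute X (cuspLog x' y') ↔
      Commute X (cuspLog 1 0) ∧ Commute X (cuspLog 0 1) := by
  refine ⟨fun ⟨h, h'⟩ => ?_, fun ⟨h₁, h₂⟩ => ?_⟩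
  · -- Cramer's rule for the `2 × 2` system with determinant `x * y' - x' * y`.
    have e₁ : cuspLog 1 0 =
        (x * y' - x' * y)⁻¹ • (y' • cuspLog x y - y • cuspLog x' y') := by
      rw [eq_inv_smul_iff₀ hd, cuspLog_eq_smul_add_smul x, cuspLog_eq_smul_add_smul x']
      module
    have e₂ : cuspLog 0 1 =
        (x * y' - x' * y)⁻¹ • (x • cuspLog x' y' - x' • cuspLog x y) := by
      rw [eq_inv_smul_iff₀ hd, cuspLog_eq_smul_add_smul x, cuspLog_eq_smul_add_smul x']
      module
    rw [e₁, e₂]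
    exact ⟨((h.smul_right _).sub_right (h'.smul_right _)).smul_right _,
      ((h'.smul_right _).sub_right (h.smul_right _)).smul_right _⟩
  · rw [cuspLog_eq_smul_add_smul x, cuspLog_eq_smul_add_smul x']
    exact ⟨(h₁.smul_right _).add_right (h₂.smul_right _),
      (h₁.smul_right _).add_right (h₂.smul_right _)⟩

def cuspCommutantMap : ℝ × ℝ × ℝ →ₗ[ℝ] Matrix (Fin 4) (Fin 4) ℝ where
  toFun p := !![0, p.1, p.2.1, p.2.2;
                0, 0, 0, p.1;
                0, 0, 0, p.2.1;
                0, 0, 0, 0]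
  map_add' p q := by ext i j; fin_cases i <;> fin_cases j <;> simp
  map_smul' c p := by ext i j; fin_cases i <;> fin_cases j <;> simp

theorem cuspCommutantMap_injective : Function.Injective cuspCommutantMap := by
  intro p q h
  have e := congrFun₂ h
  simp [cuspCommutantMap, Fin.forall_fin_succ] at e
  ext <;> simp [e]

theorem trace_eq_zero_and_commute_cuspLog_iff {X : Matrix (Fin 4) (Fin 4) ℝ} :
    X.trace = 0 ∧ Commute X (cuspLog 1 0) ∧ Commute X (cuspLog 0 1) ↔
      X ∈ LinearMap.range cuspCommutantMap := by
  constructor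
  · rintro ⟨htr, h₁, h₂⟩
    have e₁ := congrFun₂ h₁.eq
    have e₂ := congrFun₂ h₂.eq
    simp [cuspLog, mul_apply, Fin.sum_univ_four, Fin.forall_fin_succ] at e₁ e₂
    simp [trace, Fin.sum_univ_four] at htr
    refine ⟨(X 0 1, X 0 2, X 0 3), ?_⟩
    ext i j
    fin_cases i <;> fin_cases j <;> simp [cuspCommutantMap] <;> linarith
  · rintro ⟨p, rfl⟩
    refine ⟨?_, ?_, ?_⟩ <;>
      simp [cuspCommutantMap, cuspLog, trace, Fin.sum_univ_four, Commute, SemiconjBy]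

theorem tracelessCommutant_pair_eq {x y x' y' : ℝ} (hd : x * y' - x' * y ≠ 0) :
    tracelessCommutant {Mcusp x y, Mcusp x' y'} = LinearMap.range cuspCommutantMap := by
  ext X
  rw [← trace_eq_zero_and_commute_cuspLog_iff, ← commute_cuspLog_pair_iff hd,
    ← commute_Mcusp_iff, ← commute_Mcusp_iff]
  simp [tracelessCommutant, Commute, SemiconjBy]

/-- The traceless `4 × 4` real matrices commuting with both `M(1,0)` and
`M(cos(2π/3), sin(2π/3))` form a `3`-dimensional space, consisting exactly of the matrices
with entries `x₁` in positions `(1,2)` and `(2,4)`, `x₂` in positions `(1,3)` and `(3,4)`,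
`x₃` in position `(1,4)`, and zero elsewhere (in `1`-based indexing). -/
theorem traceless_commutant_lattice :
    ((tracelessCommutant {Mcusp 1 0, Mcusp (cos (2 * π / 3)) (sin (2 * π / 3))} :
        Set (Matrix (Fin 4) (Fin 4) ℝ))
        = {X | ∃ x₁ x₂ x₃ : ℝ, X = !![0, x₁, x₂, x₃;
                                      0, 0, 0, x₁;
                                      0, 0, 0, x₂;
                                      0, 0, 0, 0]}) ∧
      Module.finrank ℝ
        (tracelessCommutant {Mcusp 1 0, Mcusp (cos (2 * π / 3)) (sin (2 * π / 3))}) = 3 := by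
  have hsin : sin (2 * π / 3) ≠ 0 :=
    (sin_pos_of_pos_of_lt_pi (by positivity) (by linarith [pi_pos])).ne'
  rw [tracelessCommutant_pair_eq (by simpa using hsin)]
  refine ⟨?_, ?_⟩
  · ext X
    simp [cuspCommutantMap, Prod.exists, eq_comm]
  · rw [LinearMap.finrank_range_of_inj cuspCommutantMap_injective]
    simp
end

section
/- The real vector space of traceless 4×4 real matrices X that commute with each of M(1,0), M(cos(2π/3), sin(2π/3)), and Ω(1,2π/3) has dimension 1; explicitly, it is spanned by the matrix whose only nonzero entry is a 1 in position (1,4). -/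
open Matrix Real

/-- The similarity `Ω(1, 2π/3) = diag(1, R, 1)` with `R` the rotation of angle `2π/3`. -/
noncomputable def Omega : Matrix (Fin 4) (Fin 4) ℝ :=
  !![1, 0, 0, 0;
     0, cos (2 * π / 3), -sin (2 * π / 3), 0;
     0, sin (2 * π / 3), cos (2 * π / 3), 0;
     0, 0, 0, 1]

/-!
`Ω` fixes `e₁, e₄` and rotates the plane `⟨e₂, e₃⟩` by an angle with nonzero sine, so it has no
fixed vector there; hence a matrix commuting with `Ω` preserves both planes and acts on `⟨e₂, e₃⟩`
as `p + q J`. Commuting with the unipotent `M(1,0)` kills the corner `(4,1)` and `q`, and forces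
the diagonal to be scalar, which the trace condition makes zero. Conversely `E₁₄` commutes with
every matrix whose first column is `e₁` and last row is `e₄ᵀ`, as for `M(x,y)` and `Ω`.
-/

theorem Matrix.commute_single_one {n α : Type*} [Fintype n] [DecidableEq n] [Semiring α]
    {i j : n} {M : Matrix n n α} (hrow : ∀ k ≠ j, M j k = 0) (hcol : ∀ k ≠ i, M k i = 0)
    (hdiag : M i i = M j j) : Commute (single i j 1) M := by
  ext a b
  by_cases ha : a = i <;> by_cases hb : b = j <;> subst_vars <;> simp [*]

def blockRotation (c s : ℝ) : Matrix (Fin 4) (Fin 4) ℝ :=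
  !![1, 0, 0, 0;
     0, c, -s, 0;
     0, s, c, 0;
     0, 0, 0, 1]

-- `(c - 1) ^ 2 + s ^ 2` is `det (R - 1)` for the rotation-like matrix `R = !![c, -s; s, c]`.
theorem eq_zero_of_rotation_fixed {s : ℝ} (hs : s ≠ 0) (c u v : ℝ)
    (hu : c * u - s * v = u) (hv : s * u + c * v = v) : u = 0 ∧ v = 0 := by
  have hpos : 0 < (c - 1) ^ 2 + s ^ 2 := by positivity
  constructor
  · refine (mul_eq_zero.mp ?_).resolve_left hpos.ne'
    linear_combination (c - 1) * hu + s * hv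
  · refine (mul_eq_zero.mp ?_).resolve_left hpos.ne'
    linear_combination -s * hu + (c - 1) * hv

theorem eq_of_commute_blockRotation {c s : ℝ} (hs : s ≠ 0) {X : Matrix (Fin 4) (Fin 4) ℝ}
    (h : Commute X (blockRotation c s)) :
    X = !![X 0 0, 0, 0, X 0 3;
           0, X 1 1, X 1 2, 0;
           0, -X 1 2, X 1 1, 0;
           X 3 0, 0, 0, X 3 3] := by
  have e01 := congrFun₂ h.eq 0 1; have e02 := congrFun₂ h.eq 0 2
  have e31 := congrFun₂ h.eq 3 1; have e32 := congrFun₂ h.eq 3 2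
  have e10 := congrFun₂ h.eq 1 0; have e20 := congrFun₂ h.eq 2 0
  have e13 := congrFun₂ h.eq 1 3; have e23 := congrFun₂ h.eq 2 3
  have e11 := congrFun₂ h.eq 1 1; have e12 := congrFun₂ h.eq 1 2
  simp only [blockRotation, mul_apply, of_apply, cons_val', cons_val_zero, cons_val_one, cons_val,
    cons_val_fin_one, Fin.sum_univ_four, mul_zero, zero_mul, mul_one, one_mul, zero_add, add_zero,
    mul_neg, neg_mul] at e01 e02 e31 e32 e10 e20 e13 e23 e11 e12
  -- rows `0` and `3` of `X` are fixed by the transposed rotation, which has sine `-s`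
  have hs' : -s ≠ 0 := neg_ne_zero.mpr hs
  obtain ⟨h01, h02⟩ := eq_zero_of_rotation_fixed hs' c (X 0 1) (X 0 2)
    (by linear_combination e01) (by linear_combination e02)
  obtain ⟨h31, h32⟩ := eq_zero_of_rotation_fixed hs' c (X 3 1) (X 3 2)
    (by linear_combination e31) (by linear_combination e32)
  obtain ⟨h10, h20⟩ := eq_zero_of_rotation_fixed hs c (X 1 0) (X 2 0)
    e10.symm e20.symm
  obtain ⟨h13, h23⟩ := eq_zero_of_rotation_fixed hs c (X 1 3) (X 2 3)
    e13.symm e23.symm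
  have h21 : X 2 1 = -X 1 2 := mul_left_cancel₀ hs (by linear_combination e11)
  have h22 : X 2 2 = X 1 1 := mul_left_cancel₀ hs (by linear_combination e12)
  ext i j
  fin_cases i <;> fin_cases j <;> simp [h01, h02, h31, h32, h10, h20, h13, h23, h21, h22]

theorem eq_smul_single_of_commute_Mcusp {x a b p q r t : ℝ} (hx : x ≠ 0)
    (h : Commute !![a, 0, 0, b; 0, p, q, 0; 0, -q, p, 0; r, 0, 0, t] (Mcusp x 0))
    (htr : trace !![a, 0, 0, b; 0, p, q, 0; 0, -q, p, 0; r, 0, 0, t] = 0) :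
    !![a, 0, 0, b; 0, p, q, 0; 0, -q, p, 0; r, 0, 0, t] = b • single 0 3 1 := by
  have e31 := congrFun₂ h.eq 3 1; have e23 := congrFun₂ h.eq 2 3
  have e01 := congrFun₂ h.eq 0 1; have e13 := congrFun₂ h.eq 1 3
  simp only [Mcusp, mul_apply, of_apply, cons_val', cons_val_zero, cons_val_one, cons_val,
    cons_val_fin_one, Fin.sum_univ_four, mul_zero, zero_mul, mul_one, zero_add, add_zero,
    mul_neg, neg_mul, neg_zero] at e31 e23 e01 e13
  simp only [trace, diag_apply, of_apply, cons_val', cons_val_zero, cons_val_one, cons_val,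
    cons_val_fin_one, Fin.sum_univ_four] at htr
  obtain rfl : r = 0 := (mul_eq_zero.mp e31).resolve_right hx
  obtain rfl : q = 0 := (mul_eq_zero.mp (neg_eq_zero.mp e23)).resolve_right hx
  obtain rfl : a = p := mul_right_cancel₀ hx (e01.trans (mul_comm _ _))
  obtain rfl : a = t := mul_right_cancel₀ hx (e13.trans (mul_comm _ _))
  obtain rfl : a = 0 := by linarith
  ext i j
  fin_cases i <;> fin_cases j <;> simp

theorem eq_smul_single_of_traceless_commute {x c s : ℝ} (hx : x ≠ 0) (hs : s ≠ 0)
    {X : Matrix (Fin 4) (Fin 4) ℝ} (htr : X.trace = 0) (hM : Commute X (Mcusp x 0))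
    (hR : Commute X (blockRotation c s)) : X = X 0 3 • single 0 3 1 := by
  have hX := eq_of_commute_blockRotation hs hR
  rw [hX] at hM htr
  calc X = _ := hX
    _ = X 0 3 • single 0 3 1 := eq_smul_single_of_commute_Mcusp hx hM htr

theorem single_zero_three_commute_Mcusp (x y : ℝ) : Commute (single 0 3 1) (Mcusp x y) :=
  commute_single_one (by intro k hk; fin_cases k <;> simp_all [Mcusp])
    (by intro k hk; fin_cases k <;> simp_all [Mcusp]) (by simp [Mcusp])

theorem single_zero_three_commute_blockRotation (c s : ℝ) :
    Commute (single 0 3 1) (blockRotation c s) :=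
  commute_single_one (by intro k hk; fin_cases k <;> simp_all [blockRotation])
    (by intro k hk; fin_cases k <;> simp_all [blockRotation]) (by simp [blockRotation])

theorem Omega_eq_blockRotation : Omega = blockRotation (cos (2 * π / 3)) (sin (2 * π / 3)) := rfl

theorem sin_two_pi_div_three_ne_zero : sin (2 * π / 3) ≠ 0 :=
  (sin_pos_of_pos_of_lt_pi (by positivity) (by linarith [pi_pos])).ne'

/-- The traceless `4 × 4` real matrices commuting with `M(1,0)`,
`M(cos(2π/3), sin(2π/3))` and `Ω(1, 2π/3)` form a `1`-dimensional space, spanned by the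
matrix whose only nonzero entry is a `1` in position `(1,4)` (in `1`-based indexing). -/
theorem traceless_commutant_turnover :
    tracelessCommutant {Mcusp 1 0, Mcusp (cos (2 * π / 3)) (sin (2 * π / 3)), Omega}
        = Submodule.span ℝ {Matrix.single (0 : Fin 4) (3 : Fin 4) (1 : ℝ)} ∧
      Module.finrank ℝ
        (tracelessCommutant {Mcusp 1 0, Mcusp (cos (2 * π / 3)) (sin (2 * π / 3)), Omega}) = 1 := by
  have hspan : tracelessCommutant {Mcusp 1 0, Mcusp (cos (2 * π / 3)) (sin (2 * π / 3)), Omega}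
      = Submodule.span ℝ {single 0 3 1} := by
    refine le_antisymm ?_ ?_
    · rintro X ⟨htr, hcomm⟩
      have hR : Commute X (blockRotation _ _) := Omega_eq_blockRotation ▸ hcomm Omega (by simp)
      have hX := eq_smul_single_of_traceless_commute one_ne_zero sin_two_pi_div_three_ne_zero htr
        (hcomm _ (by simp)) hR
      exact Submodule.mem_span_singleton.mpr ⟨X 0 3, hX.symm⟩
    · rw [Submodule.span_le, Set.singleton_subset_iff]
      refine ⟨trace_single_eq_of_ne _ _ _ (by decide), ?_⟩
      rintro A (rfl | rfl | rfl)
      · exact single_zero_three_commute_Mcusp _ _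
      · exact single_zero_three_commute_Mcusp _ _
      · exact Omega_eq_blockRotation ▸ single_zero_three_commute_blockRotation _ _
  have hne : single (0 : Fin 4) (3 : Fin 4) (1 : ℝ) ≠ 0 := fun h =>
    one_ne_zero (α := ℝ) (by simpa using congrFun₂ h 0 3)
  exact ⟨hspan, by rw [hspan, finrank_span_singleton hne]⟩
end

section
/- Let D₁ be the 4×4 real matrix with rows (0, 1/2, 0, 1/6), (0, 1, 0, 1/2), (0, 0, −1, 0), (0, 0, 0, 0) and D₂ the 4×4 real matrix with rows (0, 0, 1/2, 0), (0, 0, 1, 0), (0, 1, 0, 1/2), (0, 0, 0, 0). Then for every (λ₁,λ₂) ∈ ℝ² with (λ₁,λ₂) ≠ (0,0), there is no 4×4 real matrix v such that Ω(1,2π/3)·v = v·Ω(1,2π/3) and M(1,0)·v − v·M(1,0) = λ₁D₁ + λ₂D₂. -/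
open Matrix Real

/-- The derivative at `(0,0)` of the slice family `Ψ₍u,v₎(a²b)` with respect to `u`. -/
noncomputable def Done : Matrix (Fin 4) (Fin 4) ℝ :=
  !![0, 1 / 2, 0, 1 / 6;
     0, 1, 0, 1 / 2;
     0, 0, -1, 0;
     0, 0, 0, 0]

/-- The derivative at `(0,0)` of the slice family `Ψ₍u,v₎(a²b)` with respect to `v`. -/
noncomputable def Dtwo : Matrix (Fin 4) (Fin 4) ℝ :=
  !![0, 0, 1 / 2, 0;
     0, 0, 1, 0;
     0, 1, 0, 1 / 2;
     0, 0, 0, 0]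

/-- No nontrivial linear combination of the tangent cocycles `d₁, d₂` is an inner cocycle:
for `(λ₁, λ₂) ≠ (0,0)` there is no matrix `v` commuting with `Ω(1,2π/3)` with
`M(1,0)·v − v·M(1,0) = λ₁ D₁ + λ₂ D₂`. -/
theorem tangent_cocycles_not_inner (l₁ l₂ : ℝ) (h : (l₁, l₂) ≠ (0, 0)) :
    ¬ ∃ v : Matrix (Fin 4) (Fin 4) ℝ,
        Omega * v = v * Omega ∧
        Mcusp 1 0 * v - v * Mcusp 1 0 = l₁ • Done + l₂ • Dtwo := by
  rintro ⟨v, hΩ, hC⟩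
  have hcos : cos (2 * π / 3) = -(1/2) := by
    have : (2 * π / 3) = π - π / 3 := by ring
    rw [this, Real.cos_pi_sub, Real.cos_pi_div_three]
  -- entry (2,2) of the cocycle equation gives l₁ = 0
  have h22 := congrFun (congrFun hC 2) 2
  have h10 := congrFun (congrFun hC 1) 0
  have h00 := congrFun (congrFun hC 0) 0
  have h21 := congrFun (congrFun hC 2) 1
  simp only [Mcusp, Done, Dtwo, Matrix.sub_apply, Matrix.add_apply, Matrix.smul_apply,
    Matrix.mul_apply, Fin.sum_univ_four, Matrix.cons_val_zero, Matrix.cons_val_one,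
    Matrix.head_cons, Matrix.cons_val_two, Matrix.tail_cons, Matrix.cons_val_three,
    Matrix.of_apply, Matrix.cons_val', Matrix.empty_val', Matrix.cons_val_fin_one,
    Matrix.head_fin_const, smul_eq_mul] at h22 h10 h00 h21
  norm_num at h22 h10 h00 h21
  have hl1 : l₁ = 0 := by linarith
  have hv30 : v 3 0 = 0 := by linarith
  have hv10 : v 1 0 = 0 := by linarith
  have hΩ20 := congrFun (congrFun hΩ 2) 0
  simp only [Omega, Matrix.mul_apply, Fin.sum_univ_four, Matrix.cons_val_zero,
    Matrix.cons_val_one, Matrix.head_cons, Matrix.cons_val_two, Matrix.tail_cons,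
    Matrix.cons_val_three, Matrix.of_apply, Matrix.cons_val', Matrix.empty_val',
    Matrix.cons_val_fin_one, Matrix.head_fin_const, hcos, hv10] at hΩ20
  norm_num at hΩ20
  have hv20 : v 2 0 = 0 := by linarith
  have hl2 : l₂ = 0 := by
    rw [hv20] at h21; linarith
  exact h (by simp [hl1, hl2])
end

section
/- Let G be a group, n ≥ 1, and ρ₁, ρ₂ : G → GL(n,ℝ) group homomorphisms. If there exists an invertible complex n×n matrix M such that M·ρ₁(g) = ρ₂(g)·M for all g ∈ G (viewing the real matrices ρᵢ(g) as complex matrices), then there exists an invertible real n×n matrix M' such that M'·ρ₁(g) = ρ₂(g)·M' for all g ∈ G. -/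
/-!
Write `M = A + i B` with `A`, `B` real. Since the `ρᵢ(g)` are real, taking real and imaginary parts
of `M ρ₁(g) = ρ₂(g) M` shows that `A` and `B`, hence every `A + x B` with `x ∈ ℝ`, intertwine
`ρ₁` and `ρ₂`. The polynomial `x ↦ det (A + x B)` takes the nonzero value `det M` at `x = i`, so it
is not the zero polynomial and, `ℝ` being infinite, it does not vanish at some real `x₀`.
-/

open Matrix Polynomial

namespace Matrix

variable {m n p : Type*} [Fintype n] {R A : Type*} [CommSemiring R] [Semiring A] [Algebra R A]

theorem map_mul_map_algebraMap (f : A →ₗ[R] R) (M : Matrix m n A) (X : Matrix n p R) :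
    (M * X.map (algebraMap R A)).map f = M.map f * X := by
  ext i j
  simp only [map_apply, mul_apply, map_sum]
  refine Finset.sum_congr rfl fun k _ => ?_
  rw [← Algebra.commutes, ← Algebra.smul_def, map_smul, smul_eq_mul, mul_comm]

theorem map_map_algebraMap_mul (f : A →ₗ[R] R) (X : Matrix m n R) (M : Matrix n p A) :
    (X.map (algebraMap R A) * M).map f = X * M.map f := by
  ext i j
  simp [mul_apply, ← Algebra.smul_def]

theorem map_mul_eq_mul_map_of_mul_map_algebraMap_eq (f : A →ₗ[R] R) {M : Matrix n n A}
    {X Y : Matrix n n R} (h : M * X.map (algebraMap R A) = Y.map (algebraMap R A) * M) :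
    M.map f * X = Y * M.map f := by
  rw [← map_mul_map_algebraMap, h, map_map_algebraMap_mul]

end Matrix

section Pencil

variable {n K L : Type*} [Fintype n] [DecidableEq n] [CommRing K] [IsDomain K] [Infinite K]
  [CommRing L] [Algebra K L]

theorem Matrix.exists_det_add_smul_ne_zero (A B : Matrix n n K) (t : L)
    (h : (A.map (algebraMap K L) + t • B.map (algebraMap K L)).det ≠ 0) :
    ∃ x : K, (A + x • B).det ≠ 0 := by
  set P : K[X] := det ((X : K[X]) • B.map C + A.map C)
  have eval_P (x : K) : P.eval x = (A + x • B).det := by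
    rw [← coe_evalRingHom, RingHom.map_det]
    congr 1
    ext i j
    simp only [RingHom.mapMatrix_apply, map_apply, add_apply, smul_apply, smul_eq_mul,
      coe_evalRingHom, eval_add, eval_mul, eval_X, eval_C]
    ring
  have aeval_P : aeval t P = (A.map (algebraMap K L) + t • B.map (algebraMap K L)).det := by
    rw [AlgHom.map_det]
    congr 1
    ext i j
    simp only [AlgHom.mapMatrix_apply, map_apply, add_apply, smul_apply, smul_eq_mul,
      map_add, map_mul, aeval_X, aeval_C]
    ring
  have hP : P ≠ 0 := by
    rintro hP
    rw [hP, map_zero] at aeval_P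
    exact h aeval_P.symm
  by_contra! hx
  exact hP (zero_of_eval_zero P fun x => (eval_P x).trans (hx x))

end Pencil

theorem Matrix.map_re_add_I_smul_map_im {m n : Type*} (M : Matrix m n ℂ) :
    (M.map Complex.re).map (algebraMap ℝ ℂ) + Complex.I • (M.map Complex.im).map (algebraMap ℝ ℂ)
      = M := by
  ext i j
  simpa [mul_comm] using Complex.re_add_im (M i j)

theorem real_conjugacy_of_complex_conjugacy_general
    (n : ℕ) (G : Type*) [Group G]
    (ρ₁ ρ₂ : G →* GL (Fin n) ℝ)
    (M : Matrix (Fin n) (Fin n) ℂ) (hM : IsUnit M)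
    (h : ∀ g : G, M * ((ρ₁ g : Matrix (Fin n) (Fin n) ℝ).map (Complex.ofReal ·))
        = ((ρ₂ g : Matrix (Fin n) (Fin n) ℝ).map (Complex.ofReal ·)) * M) :
    ∃ M' : Matrix (Fin n) (Fin n) ℝ, IsUnit M' ∧
      ∀ g : G, M' * (ρ₁ g : Matrix (Fin n) (Fin n) ℝ)
        = (ρ₂ g : Matrix (Fin n) (Fin n) ℝ) * M' := by
  set A := M.map Complex.re
  set B := M.map Complex.im
  obtain ⟨x, hx⟩ := exists_det_add_smul_ne_zero A B Complex.I <| by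
    rw [map_re_add_I_smul_map_im]
    exact ((isUnit_iff_isUnit_det M).1 hM).ne_zero
  refine ⟨A + x • B, (isUnit_iff_isUnit_det _).2 (isUnit_iff_ne_zero.2 hx), fun g => ?_⟩
  have hA : A * ρ₁ g = ρ₂ g * A := map_mul_eq_mul_map_of_mul_map_algebraMap_eq Complex.reLm (h g)
  have hB : B * ρ₁ g = ρ₂ g * B := map_mul_eq_mul_map_of_mul_map_algebraMap_eq Complex.imLm (h g)
  rw [add_mul, mul_add, smul_mul_assoc, mul_smul_comm, hA, hB]

/-- Two real representations of a group that are conjugate by an invertible complex matrix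
are conjugate by an invertible real matrix. -/
theorem real_conjugacy_of_complex_conjugacy
    (n : ℕ) (hn : 1 ≤ n) (G : Type*) [Group G]
    (ρ₁ ρ₂ : G →* GL (Fin n) ℝ)
    (M : Matrix (Fin n) (Fin n) ℂ) (hM : IsUnit M)
    (h : ∀ g : G, M * ((ρ₁ g : Matrix (Fin n) (Fin n) ℝ).map (Complex.ofReal ·))
        = ((ρ₂ g : Matrix (Fin n) (Fin n) ℝ).map (Complex.ofReal ·)) * M) :
    ∃ M' : Matrix (Fin n) (Fin n) ℝ, IsUnit M' ∧
      ∀ g : G, M' * (ρ₁ g : Matrix (Fin n) (Fin n) ℝ)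
        = (ρ₂ g : Matrix (Fin n) (Fin n) ℝ) * M' :=
  real_conjugacy_of_complex_conjugacy_general n G ρ₁ ρ₂ M hM h
end

section
/- Let n be an odd positive integer, G a group, and ρ₁, ρ₂ : G → SL(n,ℝ) semisimple group homomorphisms. Let i : SL(n,ℝ) → SL(n+1,ℝ) be the block inclusion g ↦ g ⊕ 1. If there exists P ∈ SL(n+1,ℝ) with P·(i∘ρ₁)(g)·P⁻¹ = (i∘ρ₂)(g) for all g ∈ G, then there exists Q ∈ SL(n,ℝ) with Q·ρ₁(g)·Q⁻¹ = ρ₂(g) for all g ∈ G. -/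
/-!
Cancellation of a trivial summand: if `ρ₁ ⊕ 1` and `ρ₂ ⊕ 1` are intertwined by an isomorphism
`e = [[A, b], [c, d]]` of `V × K`, then `A` intertwines `ρ₁` and `ρ₂`, `c` is `ρ₁`-invariant and
`b` is `ρ₂`-fixed, so every `A + b ⊗ t c` intertwines `ρ₁` and `ρ₂`. If `A` is not injective, pick
`v₀ ∈ ker A`; then `e (v₀, 0) = (0, c v₀)` forces `c v₀ ≠ 0`, and `A + b ⊗ (c v₀)⁻¹ c` is injective,
because a vector in its kernel is mapped by `e` into the line through `e (v₀, 0)`.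
Over `ℝ` with `n` odd, every nonzero determinant has a real `n`-th root, so the
intertwiner can be rescaled into `SL(n, ℝ)`.
-/

open Matrix

/-- A representation `ρ : G → SL(n,ℝ)` is semisimple if `ℝⁿ` is a semisimple module for
the induced `ℝ[G]`-action, i.e. every `ρ`-invariant subspace admits a `ρ`-invariant
complement. -/
def IsSemisimpleRep {n : ℕ} {G : Type*} [Group G]
    (ρ : G →* Matrix.SpecialLinearGroup (Fin n) ℝ) : Prop :=
  ∀ W : Submodule ℝ (Fin n → ℝ),
    (∀ g : G, ∀ w ∈ W, (ρ g : Matrix (Fin n) (Fin n) ℝ) *ᵥ w ∈ W) →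
      ∃ W' : Submodule ℝ (Fin n → ℝ),
        (∀ g : G, ∀ w ∈ W', (ρ g : Matrix (Fin n) (Fin n) ℝ) *ᵥ w ∈ W') ∧ IsCompl W W'

/-- The block inclusion `SL(n,ℝ) → SL(n+1,ℝ)`, `g ↦ g ⊕ 1`. -/
def blockInclusion {n : ℕ} (g : Matrix (Fin n) (Fin n) ℝ) :
    Matrix (Fin (n + 1)) (Fin (n + 1)) ℝ :=
  Matrix.reindex finSumFinEquiv finSumFinEquiv
    (Matrix.fromBlocks g 0 0 (1 : Matrix (Fin 1) (Fin 1) ℝ))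

open Function

section Cancellation

variable {K V W ι : Type*} [Field K] [AddCommGroup V] [Module K V] [AddCommGroup W] [Module K W]

-- Writing `e = [[A, b], [c, d]]`, these are `c` and `A + b ⊗ φ`.
def lowerLeftBlock (e : (V × K) ≃ₗ[K] (W × K)) : V →ₗ[K] K :=
  LinearMap.snd K W K ∘ₗ e.toLinearMap ∘ₗ LinearMap.inl K V K

def graphBlock (e : (V × K) ≃ₗ[K] (W × K)) (φ : V →ₗ[K] K) : V →ₗ[K] W :=
  LinearMap.fst K W K ∘ₗ e.toLinearMap ∘ₗ LinearMap.id.prod φ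

lemma lowerLeftBlock_apply (e : (V × K) ≃ₗ[K] (W × K)) (v : V) :
    lowerLeftBlock e v = (e (v, 0)).2 := rfl

lemma graphBlock_apply (e : (V × K) ≃ₗ[K] (W × K)) (φ : V →ₗ[K] K) (v : V) :
    graphBlock e φ v = (e (v, φ v)).1 := rfl

lemma exists_injective_graphBlock (e : (V × K) ≃ₗ[K] (W × K)) :
    ∃ t : K, Injective (graphBlock e (t • lowerLeftBlock e)) := by
  set c := lowerLeftBlock e
  by_cases hA : Injective (graphBlock e 0)
  · exact ⟨0, by rwa [zero_smul]⟩
  obtain ⟨v₀, hv₀, hv₀_ne⟩ : ∃ v₀, graphBlock e 0 v₀ = 0 ∧ v₀ ≠ 0 := by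
    simpa [injective_iff_map_eq_zero] using hA
  have he₀ : e (v₀, 0) = (0, c v₀) := Prod.ext (by simpa [graphBlock_apply] using hv₀) rfl
  have hc₀ : c v₀ ≠ 0 := by
    intro h
    apply hv₀_ne
    simpa [h, Prod.ext_iff] using e.injective (he₀.trans (by simp [h]) : e (v₀, 0) = e 0)
  refine ⟨(c v₀)⁻¹, (injective_iff_map_eq_zero _).2 fun v hv => ?_⟩
  have hv' : (e (v, (c v₀)⁻¹ * c v)).1 = 0 := hv
  set μ := (e (v, (c v₀)⁻¹ * c v)).2 / c v₀
  have hline : e (v, (c v₀)⁻¹ * c v) = e (μ • (v₀, 0)) := by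
    rw [map_smul, he₀]
    ext
    · simpa using hv'
    · simp [μ, hc₀]
  obtain ⟨hv, hcv⟩ := Prod.ext_iff.1 (e.injective hline)
  simp only [Prod.smul_mk, smul_zero, mul_eq_zero, inv_eq_zero, hc₀, false_or] at hv hcv
  have hμ : μ * c v₀ = 0 := by rw [← smul_eq_mul, ← map_smul, ← hv, hcv]
  rw [hv, (mul_eq_zero.1 hμ).resolve_right hc₀, zero_smul]

variable {ρ₁ : ι → V →ₗ[K] V} {ρ₂ : ι → W →ₗ[K] W} {e : (V × K) ≃ₗ[K] (W × K)}

lemma lowerLeftBlock_invariant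
    (he : ∀ i x, e ((ρ₁ i).prodMap LinearMap.id x) = (ρ₂ i).prodMap LinearMap.id (e x))
    (i : ι) (v : V) : lowerLeftBlock e (ρ₁ i v) = lowerLeftBlock e v := by
  simpa [lowerLeftBlock_apply] using congrArg Prod.snd (he i (v, 0))

lemma graphBlock_intertwines
    (he : ∀ i x, e ((ρ₁ i).prodMap LinearMap.id x) = (ρ₂ i).prodMap LinearMap.id (e x))
    {φ : V →ₗ[K] K} (hφ : ∀ i v, φ (ρ₁ i v) = φ v) (i : ι) (v : V) :
    graphBlock e φ (ρ₁ i v) = ρ₂ i (graphBlock e φ v) := by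
  simpa [graphBlock_apply, hφ] using congrArg Prod.fst (he i (v, φ v))

theorem exists_linearEquiv_intertwining_of_prod [FiniteDimensional K V] [FiniteDimensional K W]
    (he : ∀ i x, e ((ρ₁ i).prodMap LinearMap.id x) = (ρ₂ i).prodMap LinearMap.id (e x)) :
    ∃ Q : V ≃ₗ[K] W, ∀ i, (Q : V →ₗ[K] W) ∘ₗ ρ₁ i = ρ₂ i ∘ₗ Q := by
  obtain ⟨t, ht⟩ := exists_injective_graphBlock e
  have hdim : Module.finrank K V = Module.finrank K W := by
    simpa [Module.finrank_prod] using e.finrank_eq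
  refine ⟨LinearMap.linearEquivOfInjective _ ht hdim, fun i => LinearMap.ext <|
    graphBlock_intertwines he (fun i v => ?_) i⟩
  simp [lowerLeftBlock_invariant he]

end Cancellation

def snocLinearEquiv (R M : Type*) [Semiring R] [AddCommMonoid M] [Module R M] (n : ℕ) :
    ((Fin n → M) × M) ≃ₗ[R] (Fin (n + 1) → M) where
  toFun x := Fin.snoc x.1 x.2
  invFun w := (Fin.init w, w (Fin.last n))
  map_add' x y := funext <| Fin.lastCases (by simp) (by simp)
  map_smul' c x := funext <| Fin.lastCases (by simp) (by simp)
  left_inv x := by simp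
  right_inv w := by simp

lemma blockInclusion_mulVec_snocLinearEquiv {n : ℕ} (M : Matrix (Fin n) (Fin n) ℝ)
    (x : (Fin n → ℝ) × ℝ) :
    blockInclusion M *ᵥ snocLinearEquiv ℝ ℝ n x =
      snocLinearEquiv ℝ ℝ n ((Matrix.toLin' M).prodMap LinearMap.id x) := by
  ext i
  refine Fin.lastCases ?_ (fun j => ?_) i <;>
    simp [snocLinearEquiv, blockInclusion, Matrix.mulVec, dotProduct, Fin.sum_univ_castSucc]

def snocConj {n : ℕ} (P : Matrix.SpecialLinearGroup (Fin (n + 1)) ℝ) :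
    ((Fin n → ℝ) × ℝ) ≃ₗ[ℝ] ((Fin n → ℝ) × ℝ) :=
  (snocLinearEquiv ℝ ℝ n).trans
    ((Matrix.SpecialLinearGroup.toLin' P).trans (snocLinearEquiv ℝ ℝ n).symm)

lemma snocConj_prodMap_toLin' {n : ℕ} {A B : Matrix (Fin n) (Fin n) ℝ}
    {P : Matrix.SpecialLinearGroup (Fin (n + 1)) ℝ}
    (h : (P : Matrix (Fin (n + 1)) (Fin (n + 1)) ℝ) * blockInclusion A *
      (P⁻¹ : Matrix.SpecialLinearGroup (Fin (n + 1)) ℝ) = blockInclusion B)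
    (x : (Fin n → ℝ) × ℝ) :
    snocConj P ((Matrix.toLin' A).prodMap LinearMap.id x) =
      (Matrix.toLin' B).prodMap LinearMap.id (snocConj P x) := by
  have hPB : (P : Matrix (Fin (n + 1)) (Fin (n + 1)) ℝ) * blockInclusion A =
      blockInclusion B * P := by
    rw [← h, mul_assoc, ← Matrix.SpecialLinearGroup.coe_mul, inv_mul_cancel,
      Matrix.SpecialLinearGroup.coe_one, mul_one]
  apply (snocLinearEquiv ℝ ℝ n).injective
  simp only [snocConj, LinearEquiv.trans_apply, Matrix.SpecialLinearGroup.toLin'_apply,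
    LinearEquiv.apply_symm_apply, ← blockInclusion_mulVec_snocLinearEquiv, Matrix.toLin'_apply,
    Matrix.mulVec_mulVec, hPB]

lemma exists_det_smul_eq_one {ι : Type*} [Fintype ι] [DecidableEq ι]
    (hodd : Odd (Fintype.card ι)) {M : Matrix ι ι ℝ} (hM : M.det ≠ 0) :
    ∃ c : ℝ, (c • M).det = 1 := by
  obtain ⟨c, hc⟩ : ∃ c : ℝ, c ^ Fintype.card ι = M.det⁻¹ := by
    rcases le_or_gt 0 M.det⁻¹ with h | h
    · exact ⟨_, Real.rpow_inv_natCast_pow h hodd.pos.ne'⟩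
    · refine ⟨-(-M.det⁻¹) ^ (Fintype.card ι : ℝ)⁻¹, ?_⟩
      rw [hodd.neg_pow, Real.rpow_inv_natCast_pow (by linarith) hodd.pos.ne', neg_neg]
  exact ⟨c, by rw [Matrix.det_smul, hc, inv_mul_cancel₀ hM]⟩

lemma Matrix.SpecialLinearGroup.exists_conj_eq_of_intertwining {n G : Type*} [Fintype n]
    [DecidableEq n] (hodd : Odd (Fintype.card n)) {A B : G → Matrix.SpecialLinearGroup n ℝ}
    (Q : (n → ℝ) ≃ₗ[ℝ] (n → ℝ))
    (hQ : ∀ g, (Q : (n → ℝ) →ₗ[ℝ] (n → ℝ)) ∘ₗ Matrix.toLin' (A g : Matrix n n ℝ) =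
      Matrix.toLin' (B g : Matrix n n ℝ) ∘ₗ Q) :
    ∃ S : Matrix.SpecialLinearGroup n ℝ, ∀ g, S * A g * S⁻¹ = B g := by
  set M := LinearMap.toMatrix' (Q : (n → ℝ) →ₗ[ℝ] (n → ℝ))
  have hM : M.det ≠ 0 := by
    rw [LinearMap.det_toMatrix']
    exact Q.isUnit_det'.ne_zero
  have hAB : ∀ g, M * A g = B g * M := fun g => by
    simpa [M, LinearMap.toMatrix'_comp] using congrArg LinearMap.toMatrix' (hQ g)
  obtain ⟨c, hc⟩ := exists_det_smul_eq_one hodd hM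
  refine ⟨⟨c • M, hc⟩, fun g => mul_inv_eq_iff_eq_mul.2 (Subtype.ext ?_)⟩
  change c • M * (A g : Matrix n n ℝ) = B g * (c • M)
  rw [smul_mul_assoc, hAB, mul_smul_comm]

theorem sl_conjugacy_of_block_conjugacy_general
    (n : ℕ) (hodd : Odd n) (G : Type*) [Group G]
    (ρ₁ ρ₂ : G →* Matrix.SpecialLinearGroup (Fin n) ℝ)
    (P : Matrix.SpecialLinearGroup (Fin (n + 1)) ℝ)
    (hP : ∀ g : G,
      (P : Matrix (Fin (n + 1)) (Fin (n + 1)) ℝ) * blockInclusion (ρ₁ g : Matrix (Fin n) (Fin n) ℝ) *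
          (P⁻¹ : Matrix.SpecialLinearGroup (Fin (n + 1)) ℝ)
        = blockInclusion (ρ₂ g : Matrix (Fin n) (Fin n) ℝ)) :
    ∃ Q : Matrix.SpecialLinearGroup (Fin n) ℝ, ∀ g : G, Q * ρ₁ g * Q⁻¹ = ρ₂ g := by
  obtain ⟨Q, hQ⟩ := exists_linearEquiv_intertwining_of_prod
    (ρ₁ := fun g => Matrix.toLin' (ρ₁ g : Matrix (Fin n) (Fin n) ℝ))
    (ρ₂ := fun g => Matrix.toLin' (ρ₂ g : Matrix (Fin n) (Fin n) ℝ))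
    fun g => snocConj_prodMap_toLin' (hP g)
  exact Matrix.SpecialLinearGroup.exists_conj_eq_of_intertwining (by simpa using hodd) Q hQ

/-- For `n` odd, if the block inclusions `i∘ρ₁, i∘ρ₂ : G → SL(n+1,ℝ)` of two semisimple
representations `ρ₁, ρ₂ : G → SL(n,ℝ)` are conjugate in `SL(n+1,ℝ)`, then `ρ₁` and `ρ₂`
are conjugate in `SL(n,ℝ)`. -/
theorem sl_conjugacy_of_block_conjugacy
    (n : ℕ) (hn : 0 < n) (hodd : Odd n) (G : Type*) [Group G]
    (ρ₁ ρ₂ : G →* Matrix.SpecialLinearGroup (Fin n) ℝ)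
    (hss₁ : IsSemisimpleRep ρ₁) (hss₂ : IsSemisimpleRep ρ₂)
    (P : Matrix.SpecialLinearGroup (Fin (n + 1)) ℝ)
    (hP : ∀ g : G,
      (P : Matrix (Fin (n + 1)) (Fin (n + 1)) ℝ) * blockInclusion (ρ₁ g : Matrix (Fin n) (Fin n) ℝ) *
          (P⁻¹ : Matrix.SpecialLinearGroup (Fin (n + 1)) ℝ)
        = blockInclusion (ρ₂ g : Matrix (Fin n) (Fin n) ℝ)) :
    ∃ Q : Matrix.SpecialLinearGroup (Fin n) ℝ, ∀ g : G, Q * ρ₁ g * Q⁻¹ = ρ₂ g :=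
  sl_conjugacy_of_block_conjugacy_general n hodd G ρ₁ ρ₂ P hP
end

section
/- Let ρ : Γ → SL(4,ℝ) be a semisimple group homomorphism. Then there exists a ρ-invariant linear subspace W of ℝ⁴ with dim W = 1 or dim W = 2. In particular, no semisimple representation of Γ on ℝ⁴ is irreducible. -/
open Matrix

/-- The relations of the turnover group `Γ = ⟨a, b ∣ a³ = b³ = (ab)³ = 1⟩`. -/
def turnoverRels : Set (FreeGroup (Fin 2)) :=
  {FreeGroup.of 0 ^ 3, FreeGroup.of 1 ^ 3, (FreeGroup.of 0 * FreeGroup.of 1) ^ 3}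

/-- The orbifold fundamental group of the Euclidean turnover `S²(3,3,3)`. -/
abbrev TurnoverGroup : Type := PresentedGroup turnoverRels

/-!
Let `a, b` be the generators and `t = a b⁻¹`. The conjugates `t, a⁻¹ t a, a t a⁻¹` commute
pairwise (they generate the translation lattice of the Euclidean triangle group) and `a`
permutes them cyclically. Over `ℂ` they have a joint eigenvector `v` with character
`χ : Fin 3 → ℂ`, and `a` carries the joint eigenspace of `χ` to that of the rotated character.
If `χ` is rotation invariant, an eigenvector of `a` in its joint eigenspace spans an invariant
line; otherwise `v, a v, a² v` have distinct characters and span an invariant `3`-space.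

A `k`-dimensional complex subspace `Z ⊆ ℂⁿ` preserved by real matrices gives a preserved real
subspace: its image under `Re`, of dimension at most `2k`, and its real points, of dimension at
least `2k - n`. One of them is proper and nonzero as soon as `0 < k < n` and `2k ≠ n`. Finally,
an invariant `3`-space of `ℝ⁴` has an invariant complementary line by semisimplicity.
-/

open Module Module.End

section Conjugates

variable {G : Type*} [Group G] {a b t : G}

theorem commute_mul_inv_conj_of_pow_three_eq_one (ha : a ^ 3 = 1) (hb : b ^ 3 = 1)
    (hab : (a * b) ^ 3 = 1) : Commute (a * b⁻¹) (a * (a * b⁻¹) * a⁻¹) := by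
  -- Insert the relators explicitly; both products reduce to `a⁻¹ b`.
  have hxy : a * b⁻¹ * (a * (a * b⁻¹) * a⁻¹) = a⁻¹ * b :=
    calc _ = (a * b⁻¹ * a ^ 3 * b * a⁻¹) * (a * ((a * b) ^ 3)⁻¹ * a⁻¹) * a ^ 3 * (a⁻¹ * b) := by
            simp only [pow_succ, pow_zero, one_mul]; group
      _ = a⁻¹ * b := by rw [ha, hab]; group
  have hyx : a * (a * b⁻¹) * a⁻¹ * (a * b⁻¹) = a⁻¹ * b :=
    calc _ = a ^ 3 * a⁻¹ * (b ^ 3)⁻¹ * b := by simp only [pow_succ, pow_zero, one_mul]; group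
      _ = a⁻¹ * b := by rw [ha, hb]; group
  exact hxy.trans hyx.symm

def conjOrbit (a t : G) : Fin 3 → G := ![t, a⁻¹ * t * a, a * t * a⁻¹]

theorem inv_mul_conjOrbit_mul (ha : a ^ 3 = 1) (i : Fin 3) :
    a⁻¹ * conjOrbit a t i * a = conjOrbit a t (i + 1) := by
  fin_cases i
  · rfl
  · calc a⁻¹ * (a⁻¹ * t * a) * a = (a ^ 3)⁻¹ * (a * t * a⁻¹) * a ^ 3 := by
          simp only [pow_succ, pow_zero, one_mul]; group
      _ = a * t * a⁻¹ := by rw [ha]; group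
  · show a⁻¹ * (a * t * a⁻¹) * a = t
    group

theorem commute_conjOrbit (ha : a ^ 3 = 1) (ht : Commute t (a * t * a⁻¹)) (i j : Fin 3) :
    Commute (conjOrbit a t i) (conjOrbit a t j) := by
  have step : ∀ i j, Commute (conjOrbit a t i) (conjOrbit a t j) →
      Commute (conjOrbit a t (i + 1)) (conjOrbit a t (j + 1)) := fun i j h ↦ by
    simpa only [← inv_mul_conjOrbit_mul ha, MulAut.conj_apply, inv_inv] using
      h.map (MulAut.conj a⁻¹)
  have h20 : Commute (conjOrbit a t 2) (conjOrbit a t 0) := ht.symm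
  have h01 := step 2 0 h20
  have h12 := step 0 1 h01
  fin_cases i <;> fin_cases j
  all_goals first | exact Commute.refl _ | assumption | exact Commute.symm ‹_›

end Conjugates

theorem Fin.injective_shift_of_shift_one_ne {α : Type*} {χ : Fin 3 → α}
    (h : (fun i ↦ χ (i + 1)) ≠ χ) : Function.Injective fun k : Fin 3 ↦ fun i ↦ χ (i + k) := by
  intro k l hkl
  by_contra hne
  have hshift : ∀ i, χ (i + (k - l)) = χ i := fun i ↦ by
    have : χ (i - l + k) = χ (i - l + l) := congrFun hkl (i - l)
    rwa [sub_add_eq_add_sub, add_sub_assoc, sub_add_cancel] at this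
  obtain hd | hd : k - l = 1 ∨ k - l = 2 := by
    fin_cases k <;> fin_cases l <;> first | exact absurd rfl hne | decide
  · exact h (funext fun i ↦ by simpa [hd] using hshift i)
  · exact h (funext fun i ↦ by simpa [hd, add_assoc] using (hshift (i + 1)).symm)

section Eigenspaces

variable {K V : Type*} [Field K] [AddCommGroup V] [Module K V]

theorem Module.End.exists_hasEigenvector_mem_of_mapsTo [IsAlgClosed K] [FiniteDimensional K V]
    {f : End K V} {E : Submodule K V} (hE : E ≠ ⊥) (hf : Set.MapsTo f E E) :
    ∃ μ w, w ∈ E ∧ f.HasEigenvector μ w := by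
  have : Nontrivial E := Submodule.nontrivial_iff_ne_bot.mpr hE
  obtain ⟨μ, hμ⟩ := exists_eigenvalue (f.restrict hf)
  obtain ⟨⟨w, hwE⟩, hw⟩ := hμ.exists_hasEigenvector
  refine ⟨μ, w, hwE, mem_eigenspace_iff.mpr (congrArg Subtype.val hw.apply_eq_smul), ?_⟩
  simpa [Subtype.ext_iff] using hw.2

theorem Module.End.exists_iInf_eigenspace_ne_bot_of_commute [IsAlgClosed K]
    [FiniteDimensional K V] [Nontrivial V] {ι : Type*} [Finite ι] (f : ι → End K V)
    (hf : ∀ i j, Commute (f i) (f j)) : ∃ χ : ι → K, ⨅ i, (f i).eigenspace (χ i) ≠ ⊥ := by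
  classical
  have := Fintype.ofFinite ι
  suffices ∀ s : Finset ι, ∃ χ : ι → K, ⨅ i ∈ s, (f i).eigenspace (χ i) ≠ ⊥ by
    simpa using this Finset.univ
  intro s
  induction s using Finset.induction_on with
  | empty => exact ⟨0, by simp⟩
  | insert j s hj ih =>
    obtain ⟨χ, hχ⟩ := ih
    have hU : Set.MapsTo (f j) ↑(⨅ i ∈ s, (f i).eigenspace (χ i))
        ↑(⨅ i ∈ s, (f i).eigenspace (χ i)) := by
      intro x hx
      simp only [SetLike.mem_coe, Submodule.mem_iInf] at hx ⊢
      exact fun i hi ↦ mapsTo_genEigenspace_of_comm (hf i j) _ 1 (hx i hi)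
    obtain ⟨μ, u, hu, hu_eig⟩ := exists_hasEigenvector_mem_of_mapsTo hχ hU
    refine ⟨Function.update χ j μ, (Submodule.ne_bot_iff _).mpr ⟨u, ?_, hu_eig.2⟩⟩
    simp only [Submodule.mem_iInf] at hu
    simp only [Finset.iInf_insert, Submodule.mem_inf, Submodule.mem_iInf, Function.update_self]
    refine ⟨hu_eig.1, fun i hi ↦ ?_⟩
    rw [Function.update_of_ne (ne_of_mem_of_not_mem hi hj)]
    exact hu i hi

theorem Module.End.linearIndependent_of_mem_iInf_eigenspace {ι κ : Type*} (f : ι → End K V)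
    (hf : ∀ i j, Commute (f i) (f j)) {χ : κ → ι → K} (hχ : Function.Injective χ) {v : κ → V}
    (hv : ∀ k, v k ∈ ⨅ i, (f i).eigenspace (χ k i)) (hv0 : ∀ k, v k ≠ 0) :
    LinearIndependent K v :=
  ((independent_iInf_maxGenEigenspace_of_forall_mapsTo f
    fun i j μ ↦ mapsTo_maxGenEigenspace_of_comm (hf j i) μ).comp hχ).linearIndependent _
    (fun k ↦ iInf_mono (fun _ ↦ eigenspace_le_maxGenEigenspace) (hv k)) hv0

theorem Module.End.span_mem_invtSubmodule {f : End K V} {s : Set V}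
    (hs : ∀ x ∈ s, ∃ c : K, f x = c • x) : Submodule.span K s ∈ f.invtSubmodule := by
  rw [mem_invtSubmodule, Submodule.span_le]
  intro x hx
  obtain ⟨c, hc⟩ := hs x hx
  rw [SetLike.mem_coe, Submodule.mem_comap, hc]
  exact Submodule.smul_mem _ _ (Submodule.subset_span hx)

end Eigenspaces

section Representation

variable {K V G : Type*} [Field K] [AddCommGroup V] [Module K V] [Group G]
  (σ : Representation K G V) {a t : G}

def Representation.jointEigenspace {ι : Type*} (τ : ι → G) (χ : ι → K) : Submodule K V :=
  ⨅ i, eigenspace (σ (τ i)) (χ i)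

variable {σ}

theorem Representation.apply_eq_smul_of_mem_jointEigenspace {ι : Type*} {τ : ι → G}
    {χ : ι → K} {v : V} (hv : v ∈ σ.jointEigenspace τ χ) (i : ι) : σ (τ i) v = χ i • v :=
  mem_eigenspace_iff.mp (Submodule.mem_iInf _ |>.mp hv i)

theorem Representation.apply_mem_jointEigenspace_conjOrbit (ha : a ^ 3 = 1) {χ : Fin 3 → K}
    {v : V} (hv : v ∈ σ.jointEigenspace (conjOrbit a t) χ) :
    σ a v ∈ σ.jointEigenspace (conjOrbit a t) fun i ↦ χ (i + 1) := by
  refine Submodule.mem_iInf _ |>.mpr fun i ↦ mem_eigenspace_iff.mpr ?_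
  have hconj : conjOrbit a t i * a = a * conjOrbit a t (i + 1) := by
    rw [← inv_mul_conjOrbit_mul ha]; group
  rw [← Module.End.mul_apply, ← map_mul, hconj, map_mul, Module.End.mul_apply,
    apply_eq_smul_of_mem_jointEigenspace hv, map_smul]

theorem Representation.exists_line_of_jointEigenspace_conjOrbit [IsAlgClosed K]
    [FiniteDimensional K V] (ha : a ^ 3 = 1) {χ : Fin 3 → K} (hfix : ∀ i, χ (i + 1) = χ i)
    (hχ : σ.jointEigenspace (conjOrbit a t) χ ≠ ⊥) :
    ∃ Z : Submodule K V, finrank K Z = 1 ∧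
      Z ∈ Module.End.invtSubmodule (σ a) ∧ Z ∈ Module.End.invtSubmodule (σ t) := by
  obtain ⟨μ, w, hwE, hw⟩ := exists_hasEigenvector_mem_of_mapsTo (f := σ a) hχ fun v hv ↦ by
    simpa only [hfix, SetLike.mem_coe] using apply_mem_jointEigenspace_conjOrbit ha hv
  refine ⟨K ∙ w, finrank_span_singleton hw.2, span_mem_invtSubmodule ?_,
    span_mem_invtSubmodule ?_⟩ <;> rintro _ rfl
  exacts [⟨μ, hw.apply_eq_smul⟩, ⟨_, apply_eq_smul_of_mem_jointEigenspace hwE 0⟩]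

theorem Representation.exists_finrank_three_of_jointEigenspace_conjOrbit (ha : a ^ 3 = 1)
    (ht : Commute t (a * t * a⁻¹)) {χ : Fin 3 → K} (hfix : (fun i ↦ χ (i + 1)) ≠ χ) {v : V}
    (hv : v ∈ σ.jointEigenspace (conjOrbit a t) χ) (hv0 : v ≠ 0) :
    ∃ Z : Submodule K V, finrank K Z = 3 ∧
      Z ∈ Module.End.invtSubmodule (σ a) ∧ Z ∈ Module.End.invtSubmodule (σ t) := by
  let u : Fin 3 → V := ![v, σ a v, σ a (σ a v)]
  have hu : ∀ k, u k ∈ σ.jointEigenspace (conjOrbit a t) fun i ↦ χ (i + k) := by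
    have hv1 := apply_mem_jointEigenspace_conjOrbit ha hv
    simp only [Fin.forall_fin_succ]
    refine ⟨by simpa [u] using hv, hv1, ?_, fun i ↦ i.elim0⟩
    simpa [u, add_assoc, one_add_one_eq_two] using apply_mem_jointEigenspace_conjOrbit ha hv1
  have hu0 : ∀ k, u k ≠ 0 := by
    have := (σ.apply_bijective a).injective
    intro k
    fin_cases k <;> simp [u, hv0, this.eq_iff' (map_zero _)]
  have hli : LinearIndependent K u :=
    linearIndependent_of_mem_iInf_eigenspace _ (fun i j ↦ (commute_conjOrbit ha ht i j).map σ)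
      (Fin.injective_shift_of_shift_one_ne hfix) hu hu0
  have hcube : σ a (σ a (σ a v)) = v := by
    rw [← Module.End.mul_apply, ← Module.End.mul_apply, ← map_mul, ← map_mul, ← pow_three', ha,
      map_one, Module.End.one_apply]
  refine ⟨Submodule.span K (Set.range u), ?_, ?_, span_mem_invtSubmodule ?_⟩
  · rw [finrank_span_eq_card hli, Fintype.card_fin]
  · rw [Module.End.mem_invtSubmodule, Submodule.span_le]
    rintro _ ⟨k, rfl⟩
    fin_cases k
    · exact Submodule.subset_span ⟨1, rfl⟩
    · exact Submodule.subset_span ⟨2, rfl⟩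
    · simpa [u, hcube] using Submodule.subset_span (R := K) (Set.mem_range_self (f := u) 0)
  · rintro _ ⟨k, rfl⟩
    exact ⟨_, apply_eq_smul_of_mem_jointEigenspace (hu k) 0⟩

theorem Representation.exists_invtSubmodule_finrank_eq_one_or_three [IsAlgClosed K]
    [FiniteDimensional K V] [Nontrivial V] (ha : a ^ 3 = 1) (ht : Commute t (a * t * a⁻¹)) :
    ∃ Z : Submodule K V, (finrank K Z = 1 ∨ finrank K Z = 3) ∧
      Z ∈ Module.End.invtSubmodule (σ a) ∧ Z ∈ Module.End.invtSubmodule (σ t) := by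
  obtain ⟨χ, hχ⟩ := exists_iInf_eigenspace_ne_bot_of_commute _
    fun i j ↦ (commute_conjOrbit ha ht i j).map σ
  by_cases hfix : (fun i ↦ χ (i + 1)) = χ
  · obtain ⟨Z, hZ, hZa, hZt⟩ := exists_line_of_jointEigenspace_conjOrbit ha (congrFun hfix) hχ
    exact ⟨Z, .inl hZ, hZa, hZt⟩
  · obtain ⟨v, hv, hv0⟩ := (Submodule.ne_bot_iff _).mp hχ
    obtain ⟨Z, hZ, hZa, hZt⟩ := exists_finrank_three_of_jointEigenspace_conjOrbit ha ht hfix hv hv0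
    exact ⟨Z, .inr hZ, hZa, hZt⟩

end Representation

section RealForm

variable {n : Type*}

noncomputable def Submodule.realPart (Z : Submodule ℂ (n → ℂ)) : Submodule ℝ (n → ℝ) :=
  (Z.restrictScalars ℝ).map (LinearMap.compLeft Complex.reLm n)

noncomputable def Submodule.realPoints (Z : Submodule ℂ (n → ℂ)) : Submodule ℝ (n → ℝ) :=
  (Z.restrictScalars ℝ).comap (LinearMap.compLeft (Algebra.linearMap ℝ ℂ) n)

variable (Z : Submodule ℂ (n → ℂ))

theorem Submodule.finrank_restrictScalars_real :
    finrank ℝ (Z.restrictScalars ℝ) = 2 * finrank ℂ Z := by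
  rw [← Complex.finrank_real_complex]
  exact (Module.finrank_mul_finrank ℝ ℂ Z).symm

theorem Submodule.realPart_ne_bot (hZ : Z ≠ ⊥) : Z.realPart ≠ ⊥ := by
  obtain ⟨z, hz, hz0⟩ := (Submodule.ne_bot_iff Z).mp hZ
  rw [Submodule.ne_bot_iff]
  by_cases hre : (fun i ↦ (z i).re) = 0
  · refine ⟨fun i ↦ (z i).im, ⟨-Complex.I • z, Z.smul_mem _ hz, ?_⟩, fun him ↦ hz0 ?_⟩
    · funext i
      simp [LinearMap.compLeft_apply]
    · funext i
      exact Complex.ext (congrFun hre i) (congrFun him i)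
  · exact ⟨_, ⟨z, hz, rfl⟩, hre⟩

theorem Submodule.realPoints_ne_top (hZ : Z ≠ ⊤) : Z.realPoints ≠ ⊤ := by
  refine fun h ↦ hZ (eq_top_iff.mpr fun z _ ↦ ?_)
  set ι := LinearMap.compLeft (Algebra.linearMap ℝ ℂ) n
  have hreal : ∀ x, ι x ∈ Z := fun x ↦ (h ▸ Submodule.mem_top : x ∈ Z.realPoints)
  have hz : z = ι (fun i ↦ (z i).re) + Complex.I • ι (fun i ↦ (z i).im) := by
    funext i
    simp [ι, mul_comm Complex.I, Complex.re_add_im]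
  rw [hz]
  exact Z.add_mem (hreal _) (Z.smul_mem _ (hreal _))

variable [Fintype n]

theorem Submodule.finrank_realPart_le : finrank ℝ Z.realPart ≤ 2 * finrank ℂ Z :=
  (Submodule.finrank_map_le _ _).trans Z.finrank_restrictScalars_real.le

theorem Submodule.two_mul_finrank_le_card_add_finrank_realPoints :
    2 * finrank ℂ Z ≤ Fintype.card n + finrank ℝ Z.realPoints := by
  set f := (Z.restrictScalars ℝ).mkQ ∘ₗ LinearMap.compLeft (Algebra.linearMap ℝ ℂ) n
  have hker : LinearMap.ker f = Z.realPoints := by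
    rw [LinearMap.ker_comp, Submodule.ker_mkQ]; rfl
  have hrank := LinearMap.finrank_range_add_finrank_ker f
  have hquot := Submodule.finrank_quotient_add_finrank (Z.restrictScalars ℝ)
  have hrange := Submodule.finrank_le (LinearMap.range f)
  have hdim := Module.finrank_mul_finrank ℝ ℂ (n → ℂ)
  rw [hker, Module.finrank_fintype_fun_eq_card] at hrank
  rw [Module.finrank_fintype_fun_eq_card, Complex.finrank_real_complex] at hdim
  rw [Z.finrank_restrictScalars_real] at hquot
  omega

theorem Matrix.re_mulVec_map_algebraMap (M : Matrix n n ℝ) (z : n → ℂ) :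
    LinearMap.compLeft Complex.reLm n (M.map (algebraMap ℝ ℂ) *ᵥ z) =
      M *ᵥ LinearMap.compLeft Complex.reLm n z := by
  funext i
  simp [LinearMap.compLeft_apply, Matrix.mulVec, dotProduct, Complex.re_sum]

theorem Matrix.mulVec_map_algebraMap (M : Matrix n n ℝ) (x : n → ℝ) :
    M.map (algebraMap ℝ ℂ) *ᵥ LinearMap.compLeft (Algebra.linearMap ℝ ℂ) n x =
      LinearMap.compLeft (Algebra.linearMap ℝ ℂ) n (M *ᵥ x) := by
  funext i
  simp [LinearMap.compLeft_apply, Matrix.mulVec, dotProduct]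

variable {Z}

theorem Submodule.mulVec_mem_realPart {M : Matrix n n ℝ}
    (hM : ∀ z ∈ Z, M.map (algebraMap ℝ ℂ) *ᵥ z ∈ Z) {w : n → ℝ} (hw : w ∈ Z.realPart) :
    M *ᵥ w ∈ Z.realPart := by
  obtain ⟨z, hz, rfl⟩ := hw
  exact ⟨_, hM z hz, M.re_mulVec_map_algebraMap z⟩

theorem Submodule.mulVec_mem_realPoints {M : Matrix n n ℝ}
    (hM : ∀ z ∈ Z, M.map (algebraMap ℝ ℂ) *ᵥ z ∈ Z) {w : n → ℝ} (hw : w ∈ Z.realPoints) :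
    M *ᵥ w ∈ Z.realPoints := by
  have := hM _ hw
  rwa [M.mulVec_map_algebraMap] at this

theorem Submodule.exists_real_ne_bot_ne_top (h0 : 0 < finrank ℂ Z)
    (htop : finrank ℂ Z < Fintype.card n) (hZ : 2 * finrank ℂ Z ≠ Fintype.card n) :
    ∃ W : Submodule ℝ (n → ℝ), W ≠ ⊥ ∧ W ≠ ⊤ ∧ ∀ M : Matrix n n ℝ,
      (∀ z ∈ Z, M.map (algebraMap ℝ ℂ) *ᵥ z ∈ Z) → ∀ w ∈ W, M *ᵥ w ∈ W := by
  rcases hZ.lt_or_gt with hlt | hgt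
  · refine ⟨Z.realPart, Z.realPart_ne_bot ?_, fun h ↦ ?_, fun M hM _ ↦ mulVec_mem_realPart hM⟩
    · rintro rfl
      simp at h0
    · have := Z.finrank_realPart_le
      rw [h, finrank_top, Module.finrank_fintype_fun_eq_card] at this
      omega
  · refine ⟨Z.realPoints, fun h ↦ ?_, Z.realPoints_ne_top ?_,
      fun M hM _ ↦ mulVec_mem_realPoints hM⟩
    · have := Z.two_mul_finrank_le_card_add_finrank_realPoints
      rw [h, finrank_bot] at this
      omega
    · rintro rfl
      rw [finrank_top, Module.finrank_fintype_fun_eq_card] at htop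
      omega

end RealForm

section SpecialLinear

variable {G : Type*} [Group G] {n : Type*} [Fintype n] [DecidableEq n]

def Matrix.SpecialLinearGroup.representation {R : Type*} [CommRing R]
    (ρ : G →* SpecialLinearGroup n R) : Representation R G (n → R) :=
  LinearEquiv.automorphismGroup.toLinearMapMonoidHom.comp (SpecialLinearGroup.toLin'.comp ρ)

variable {K : Type*} [Field K]

def Matrix.SpecialLinearGroup.invtSubgroup (ρ : G →* SpecialLinearGroup n K)
    (W : Submodule K (n → K)) : Subgroup G where
  carrier := {g | ∀ w ∈ W, (ρ g : Matrix n n K) *ᵥ w ∈ W}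
  one_mem' := by simp
  mul_mem' {g h} hg hh w hw := by
    simpa [Matrix.mulVec_mulVec] using hg _ (hh w hw)
  inv_mem' {g} hg := by
    have hmap : W.map (Matrix.toLin' (ρ g : Matrix n n K)) = W :=
      Submodule.eq_of_le_of_finrank_eq (by rintro _ ⟨w, hw, rfl⟩; exact hg w hw)
        (LinearEquiv.finrank_map_eq (SpecialLinearGroup.toLin' (ρ g)) W)
    intro w hw
    rw [← hmap] at hw
    obtain ⟨u, hu, rfl⟩ := hw
    rw [Matrix.toLin'_apply, Matrix.mulVec_mulVec, map_inv, ← SpecialLinearGroup.coe_mul,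
      inv_mul_cancel, SpecialLinearGroup.coe_one, Matrix.one_mulVec]
    exact hu

end SpecialLinear

theorem TurnoverGroup.pow_three_eq_one :
    (PresentedGroup.of 0 : TurnoverGroup) ^ 3 = 1 ∧ (PresentedGroup.of 1 : TurnoverGroup) ^ 3 = 1 ∧
      (PresentedGroup.of 0 * PresentedGroup.of 1 : TurnoverGroup) ^ 3 = 1 := by
  refine ⟨?_, ?_, ?_⟩ <;>
    simp only [PresentedGroup.of, ← map_pow, ← map_mul] <;>
    exact PresentedGroup.one_of_mem (by simp [turnoverRels])

theorem TurnoverGroup.eq_top_of_mem {H : Subgroup TurnoverGroup} (ha : PresentedGroup.of 0 ∈ H)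
    (ht : PresentedGroup.of 0 * (PresentedGroup.of 1)⁻¹ ∈ H) : H = ⊤ := by
  refine eq_top_iff.mpr fun γ _ ↦ PresentedGroup.generated_by _ H (fun j ↦ ?_) γ
  fin_cases j
  · exact ha
  · simpa using H.mul_mem (H.inv_mem ht) ha

theorem IsSemisimpleRep.exists_ne_bot_two_mul_finrank_le {n : ℕ} {G : Type*} [Group G]
    {ρ : G →* SpecialLinearGroup (Fin n) ℝ} (hss : IsSemisimpleRep ρ)
    {W : Submodule ℝ (Fin n → ℝ)} (hW : ∀ g, ∀ w ∈ W, (ρ g : Matrix (Fin n) (Fin n) ℝ) *ᵥ w ∈ W)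
    (h0 : W ≠ ⊥) (htop : W ≠ ⊤) :
    ∃ W' : Submodule ℝ (Fin n → ℝ),
      (∀ g, ∀ w ∈ W', (ρ g : Matrix (Fin n) (Fin n) ℝ) *ᵥ w ∈ W') ∧
      0 < finrank ℝ W' ∧ 2 * finrank ℝ W' ≤ n := by
  have hpos : finrank ℝ W ≠ 0 := Submodule.finrank_eq_zero.not.mpr h0
  have hlt : finrank ℝ W < n := by simpa using Submodule.finrank_lt htop
  by_cases hle : 2 * finrank ℝ W ≤ n
  · exact ⟨W, hW, by omega, hle⟩
  · obtain ⟨W', hW', hcompl⟩ := hss W hW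
    have := Submodule.finrank_add_eq_of_isCompl hcompl
    rw [Module.finrank_fin_fun] at this
    exact ⟨W', hW', by omega, by omega⟩

/-- Every semisimple representation `ρ : Γ → SL(4,ℝ)` of the turnover group admits an
invariant subspace of dimension `1` or `2`; in particular it is not irreducible. -/
theorem turnover_rep_not_irreducible
    (ρ : TurnoverGroup →* Matrix.SpecialLinearGroup (Fin 4) ℝ)
    (hss : IsSemisimpleRep ρ) :
    ∃ W : Submodule ℝ (Fin 4 → ℝ),
      (∀ γ : TurnoverGroup, ∀ w ∈ W, (ρ γ : Matrix (Fin 4) (Fin 4) ℝ) *ᵥ w ∈ W) ∧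
      (Module.finrank ℝ W = 1 ∨ Module.finrank ℝ W = 2) := by
  obtain ⟨ha, hb, hab⟩ := TurnoverGroup.pow_three_eq_one
  let σ := SpecialLinearGroup.representation ((SpecialLinearGroup.map (algebraMap ℝ ℂ)).comp ρ)
  obtain ⟨Z, hZ, hZa, hZt⟩ := σ.exists_invtSubmodule_finrank_eq_one_or_three ha
    (commute_mul_inv_conj_of_pow_three_eq_one ha hb hab)
  obtain ⟨W, hW0, hWtop, hW⟩ := Z.exists_real_ne_bot_ne_top (by omega)
    (by rw [Fintype.card_fin]; omega) (by rw [Fintype.card_fin]; omega)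
  have hWΓ : ∀ γ, γ ∈ SpecialLinearGroup.invtSubgroup ρ W := by
    rw [TurnoverGroup.eq_top_of_mem (H := SpecialLinearGroup.invtSubgroup ρ W)
      (hW _ fun z hz ↦ hZa hz) (hW _ fun z hz ↦ hZt hz)]
    exact Subgroup.mem_top
  obtain ⟨W', hW', hpos, hle⟩ := hss.exists_ne_bot_two_mul_finrank_le hWΓ hW0 hWtop
  exact ⟨W', hW', by omega⟩
end

section
/- Let ρ : Γ → SL(3,ℝ) be a group homomorphism with ρ(a) ≠ I, ρ(b) ≠ I, and ρ(ab) ≠ I. Set r = tr(ρ(ab⁻¹)), s = tr(ρ(a⁻¹b)), and τ = tr(ρ(aba⁻¹b⁻¹)). Then τ² − (rs − 3)τ + r³ + s³ − 6rs + 9 = 0. -/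
open Matrix

namespace TurnoverProofAux


lemma ch3 (M : Matrix (Fin 3) (Fin 3) ℝ) :
    M * (M * M) = (trace M) • (M * M) - (((trace M)^2 - trace (M * M))/2) • M
      + (det M) • (1 : Matrix (Fin 3) (Fin 3) ℝ) := by
  ext i j
  fin_cases i <;> fin_cases j <;>
    simp [Matrix.mul_apply, Fin.sum_univ_three, Matrix.trace_fin_three,
      Matrix.det_fin_three, Matrix.one_apply] <;> ring

lemma det_add3 (X Y : Matrix (Fin 3) (Fin 3) ℝ) :
    det (X + Y) = det X + det Y
      + (trace (X*(X*Y)) - trace X * trace (X*Y) + ((trace X)^2 - trace (X*X))/2 * trace Y)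
      + (trace (Y*(Y*X)) - trace Y * trace (X*Y) + ((trace Y)^2 - trace (Y*Y))/2 * trace X) := by
  simp [Matrix.det_fin_three, Matrix.trace_fin_three, Matrix.mul_apply, Fin.sum_univ_three]
  ring

lemma tr_sq_of_inv (M N : Matrix (Fin 3) (Fin 3) ℝ) (h : M * N = 1) (hd : det M = 1) :
    trace (M * M) = (trace M)^2 - 2 * trace N := by
  have hc := congrArg (fun P => trace (P * N)) (ch3 M)
  simp only [hd, one_smul, sub_mul, add_mul, smul_mul_assoc, trace_sub, trace_add,
    trace_smul, smul_eq_mul, one_mul, mul_assoc, h, mul_one] at hc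
  rw [show trace (1 : Matrix (Fin 3) (Fin 3) ℝ) = 3 by simp] at hc
  linarith [hc]

lemma half3 {X Y : Matrix (Fin 3) (Fin 3) ℝ} (h : X + X = Y + Y) : X = Y := by
  have h2 : (2:ℝ) • X = (2:ℝ) • Y := by rw [two_smul, two_smul]; exact h
  exact smul_right_injective _ (by norm_num : (2:ℝ) ≠ 0) h2

set_option maxHeartbeats 4000000 in
theorem key {A B : Matrix (Fin 3) (Fin 3) ℝ}
    (hA3 : A * (A * A) = 1) (hB3 : B * (B * B) = 1)
    (hAB3 : (A*B) * ((A*B) * (A*B)) = 1)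
    (hdA : det A = 1) (hdB : det B = 1)
    (htA : trace A = 0) (htA2 : trace (A*A) = 0)
    (htB : trace B = 0) (htB2 : trace (B*B) = 0)
    (htAB : trace (A*B) = 0) (htAB2 : trace ((A*B)*(A*B)) = 0) :
    trace (A*(B*(A*(A*(B*B)))))^2
      - (trace (A*(B*B)) * trace (A*(A*B)) - 3) * trace (A*(B*(A*(A*(B*B)))))
      + trace (A*(B*B))^3 + trace (A*(A*B))^3
      - 6*(trace (A*(B*B)) * trace (A*(A*B))) + 9 = 0 := by
  have htBA : trace (B*A) = 0 := by rw [trace_mul_comm]; exact htAB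
  have htABAB2 : trace (A*(B*(A*B))) = 0 := by
    have := htAB2
    simp only [mul_assoc] at this
    exact this
  have trBBA : trace (B*(B*A)) = trace (A*(B*B)) := by
    rw [show B*(B*A) = (B*B)*A from (mul_assoc _ _ _).symm, trace_mul_comm]
  have trABA : trace (A*(B*A)) = trace (A*(A*B)) := by
    rw [show A*(B*A) = (A*B)*A from (mul_assoc _ _ _).symm, trace_mul_comm]
  have trBAA : trace (B*(A*A)) = trace (A*(A*B)) := by
    rw [trace_mul_comm, mul_assoc]
  -- CH instance for A+B
  have htApB2 : trace ((A+B)*(A+B)) = 0 := by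
    simp only [mul_add, add_mul, trace_add, htA2, htB2, htAB, htBA]; norm_num
  have hdApB : det (A+B) = 2 + trace (A*(B*B)) + trace (A*(A*B)) := by
    rw [det_add3, hdA, hdB, htA, htB, htA2, htB2, htAB, trBBA]; ring
  have c1 : (A+B) * ((A+B)*(A+B))
      = (2 + trace (A*(B*B)) + trace (A*(A*B))) • (1 : Matrix (Fin 3) (Fin 3) ℝ) := by
    have h := ch3 (A+B)
    rw [htApB2, hdApB, trace_add, htA, htB] at h
    norm_num at h
    exact h
  -- CH instance for A-B
  have htAmB2 : trace ((A-B)*(A-B)) = 0 := by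
    simp only [mul_sub, sub_mul, trace_sub, htA2, htB2, htAB, htBA]; norm_num
  have hdAmB : det (A-B) = trace (A*(B*B)) - trace (A*(A*B)) := by
    have h := det_add3 A (-B)
    rw [show A + -B = A - B from (sub_eq_add_neg _ _).symm] at h
    rw [h, hdA]
    simp only [trace_neg, mul_neg, neg_mul, neg_neg, det_neg, Fintype.card_fin,
      htA, htB, htA2, htB2, htAB, hdB, trBBA]
    ring
  have c2 : (A-B) * ((A-B)*(A-B))
      = (trace (A*(B*B)) - trace (A*(A*B))) • (1 : Matrix (Fin 3) (Fin 3) ℝ) := by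
    have h := ch3 (A-B)
    rw [htAmB2, hdAmB, trace_sub, htA, htB] at h
    norm_num at h
    exact h
  -- E1 and E2
  have exp1 : (A+B) * ((A+B)*(A+B)) - (A-B)*((A-B)*(A-B))
      = (A*(A*B) + A*(B*A) + B*(A*A) + B*(B*B)) + (A*(A*B) + A*(B*A) + B*(A*A) + B*(B*B)) := by
    noncomm_ring
  have hE1 : A*(A*B) + A*(B*A) + B*(A*A) = (trace (A*(A*B))) • 1 := by
    have h2 : (A*(A*B) + A*(B*A) + B*(A*A) + B*(B*B)) + (A*(A*B) + A*(B*A) + B*(A*A) + B*(B*B))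
        = ((1 + trace (A*(A*B))) • (1 : Matrix (Fin 3) (Fin 3) ℝ))
          + ((1 + trace (A*(A*B))) • (1 : Matrix (Fin 3) (Fin 3) ℝ)) := by
      rw [← exp1, c1, c2, ← sub_smul, ← add_smul]
      congr 1
      ring
    have h3 := half3 h2
    rw [hB3] at h3
    have h4 : A*(A*B) + A*(B*A) + B*(A*A) + 1
        = (trace (A*(A*B))) • (1 : Matrix (Fin 3) (Fin 3) ℝ) + 1 := by
      rw [h3, add_smul, one_smul]; abel
    exact add_right_cancel h4
  -- E2
  have exp2 : (A+B) * ((A+B)*(A+B)) + (A-B)*((A-B)*(A-B))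
      = (A*(A*A) + A*(B*B) + B*(A*B) + B*(B*A)) + (A*(A*A) + A*(B*B) + B*(A*B) + B*(B*A)) := by
    noncomm_ring
  have hE2 : A*(B*B) + B*(A*B) + B*(B*A) = (trace (A*(B*B))) • 1 := by
    have h2 : (A*(A*A) + A*(B*B) + B*(A*B) + B*(B*A)) + (A*(A*A) + A*(B*B) + B*(A*B) + B*(B*A))
        = ((1 + trace (A*(B*B))) • (1 : Matrix (Fin 3) (Fin 3) ℝ))
          + ((1 + trace (A*(B*B))) • (1 : Matrix (Fin 3) (Fin 3) ℝ)) := by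
      rw [← exp2, c1, c2, ← add_smul, ← add_smul]
      congr 1
      ring
    have h3 := half3 h2
    rw [hA3] at h3
    have h4 : (1 : Matrix (Fin 3) (Fin 3) ℝ) + (A*(B*B) + B*(A*B) + B*(B*A))
        = (1 : Matrix (Fin 3) (Fin 3) ℝ) + (trace (A*(B*B))) • 1 := by
      rw [add_smul, one_smul] at h3
      rw [← h3]
      abel
    exact add_left_cancel h4
  -- collapse lemmas
  have haL : ∀ X : Matrix (Fin 3) (Fin 3) ℝ, A*(A*(A*X)) = X := by
    intro X
    rw [show A*(A*(A*X)) = (A*(A*A))*X by simp only [mul_assoc], hA3, one_mul]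
  have hbL : ∀ X : Matrix (Fin 3) (Fin 3) ℝ, B*(B*(B*X)) = X := by
    intro X
    rw [show B*(B*(B*X)) = (B*(B*B))*X by simp only [mul_assoc], hB3, one_mul]
  -- tr(A²B²) = 0
  have hx : trace (A*(A*(B*B))) = 0 := by
    have h := congrArg (fun M => trace (M * B)) hE1
    simp only [add_mul, smul_mul_assoc, one_mul, trace_add, trace_smul, smul_eq_mul,
      mul_assoc] at h
    rw [htB, htABAB2] at h
    · have hrot : trace (B*(A*(A*B))) = trace (A*(A*(B*B))) := by
        rw [trace_mul_comm]
        simp only [mul_assoc]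
      rw [hrot] at h
      linarith
  -- scalar facts for B² instances
  have htB4 : trace ((B*B)*(B*B)) = 0 := by
    rw [show (B*B)*(B*B) = B*(B*(B*B)) by simp only [mul_assoc], hbL]
    exact htB
  have htAB2' : trace ((A + B*B)*(A + B*B)) = 2 * trace (A*(B*B)) := by
    simp only [mul_add, add_mul, trace_add, htA2, htB4, trace_mul_comm (B*B) A]
    ring
  have htAmB2' : trace ((A - B*B)*(A - B*B)) = -(2 * trace (A*(B*B))) := by
    simp only [mul_sub, sub_mul, trace_sub, htA2, htB4, trace_mul_comm (B*B) A]
    ring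
  have htrApB2 : trace (A + B*B) = 0 := by rw [trace_add, htA, htB2, add_zero]
  have htrAmB2 : trace (A - B*B) = 0 := by rw [trace_sub, htA, htB2, sub_zero]
  have htB4A : trace ((B*B)*((B*B)*A)) = 0 := by
    rw [show (B*B)*((B*B)*A) = B*(B*(B*(B*A))) by simp only [mul_assoc], hbL]
    exact htBA
  have hdB2 : det (B*B) = 1 := by rw [det_mul, hdB, mul_one]
  have hdApB2 : det (A + B*B) = 2 := by
    rw [det_add3, hdA, hdB2, htA, htB2, htA2, htB4, hx, htB4A]
    norm_num
  have hdAmB2 : det (A - B*B) = 0 := by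
    have h := det_add3 A (-(B*B))
    rw [show A + -(B*B) = A - B*B from (sub_eq_add_neg _ _).symm] at h
    rw [h, hdA]
    simp only [trace_neg, mul_neg, neg_mul, neg_neg, det_neg, Fintype.card_fin,
      htA, htB2, htA2, htB4, hx, htB4A, hdB2]
    norm_num
  have c5p : (A + B*B) * ((A + B*B)*(A + B*B))
      = (trace (A*(B*B))) • (A + B*B) + (2:ℝ) • (1 : Matrix (Fin 3) (Fin 3) ℝ) := by
    rw [ch3 (A + B*B), htrApB2, htAB2', hdApB2]
    module
  have c5m : (A - B*B) * ((A - B*B)*(A - B*B))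
      = (-(trace (A*(B*B)))) • (A - B*B) := by
    rw [ch3 (A - B*B), htrAmB2, htAmB2', hdAmB2]
    module
  have exp5 : (A + B*B) * ((A + B*B)*(A + B*B)) - (A - B*B)*((A - B*B)*(A - B*B))
      = (A*(A*(B*B)) + A*(B*(B*A)) + B*(B*(A*A)) + B*(B*(B*(B*(B*B)))))
        + (A*(A*(B*B)) + A*(B*(B*A)) + B*(B*(A*A)) + B*(B*(B*(B*(B*B))))) := by
    noncomm_ring
  have hB6 : B*(B*(B*(B*(B*B)))) = 1 := by rw [hbL, hB3]
  have hE5 : A*(A*(B*B)) + A*(B*(B*A)) + B*(B*(A*A)) = (trace (A*(B*B))) • A := by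
    have h2 : (A*(A*(B*B)) + A*(B*(B*A)) + B*(B*(A*A)) + B*(B*(B*(B*(B*B)))))
        + (A*(A*(B*B)) + A*(B*(B*A)) + B*(B*(A*A)) + B*(B*(B*(B*(B*B)))))
        = ((trace (A*(B*B))) • A + 1) + ((trace (A*(B*B))) • A + 1) := by
      rw [← exp5, c5p, c5m]
      module
    have h3 := half3 h2
    rw [hB6] at h3
    exact add_right_cancel h3
  -- E8 instance scalars
  have htA4 : trace ((A*A)*(A*A)) = 0 := by
    rw [show (A*A)*(A*A) = A*(A*(A*A)) by simp only [mul_assoc], haL]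
    exact htA
  have htA2B : trace ((A*A)*B) = trace (A*(A*B)) := by rw [mul_assoc]
  have htBA2 : trace (B*(A*A)) = trace (A*(A*B)) := trBAA
  have ht8p : trace (A*A + B) = 0 := by rw [trace_add, htA2, htB, add_zero]
  have ht8m : trace (A*A - B) = 0 := by rw [trace_sub, htA2, htB, sub_zero]
  have ht8p2 : trace ((A*A + B)*(A*A + B)) = 2 * trace (A*(A*B)) := by
    simp only [mul_add, add_mul, trace_add, htA4, htB2, htA2B, htBA2]
    ring
  have ht8m2 : trace ((A*A - B)*(A*A - B)) = -(2 * trace (A*(A*B))) := by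
    simp only [mul_sub, sub_mul, trace_sub, htA4, htB2, htA2B, htBA2]
    ring
  have hdA2 : det (A*A) = 1 := by rw [det_mul, hdA, mul_one]
  have htA4B : trace ((A*A)*((A*A)*B)) = 0 := by
    rw [show (A*A)*((A*A)*B) = A*(A*(A*(A*B))) by simp only [mul_assoc], haL]
    exact htAB
  have htB2A2 : trace (B*(B*(A*A))) = 0 := by
    rw [show B*(B*(A*A)) = (B*B)*(A*A) by simp only [mul_assoc], trace_mul_comm,
      show (A*A)*(B*B) = A*(A*(B*B)) by simp only [mul_assoc]]
    exact hx
  have hd8p : det (A*A + B) = 2 := by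
    rw [det_add3, hdA2, hdB, htA2, htB, htA4, htB2, htA4B, htB2A2]
    norm_num
  have hd8m : det (A*A - B) = 0 := by
    have h := det_add3 (A*A) (-B)
    rw [show A*A + -B = A*A - B from (sub_eq_add_neg _ _).symm] at h
    rw [h, hdA2]
    simp only [trace_neg, mul_neg, neg_mul, neg_neg, det_neg, Fintype.card_fin,
      htA2, htB, htA4, htB2, htA4B, htB2A2, hdB]
    norm_num
  have c8p : (A*A + B) * ((A*A + B)*(A*A + B))
      = (trace (A*(A*B))) • (A*A + B) + (2:ℝ) • (1 : Matrix (Fin 3) (Fin 3) ℝ) := by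
    rw [ch3 (A*A + B), ht8p, ht8p2, hd8p]
    module
  have c8m : (A*A - B) * ((A*A - B)*(A*A - B))
      = (-(trace (A*(A*B)))) • (A*A - B) := by
    rw [ch3 (A*A - B), ht8m, ht8m2, hd8m]
    module
  have exp8 : (A*A + B) * ((A*A + B)*(A*A + B)) + (A*A - B)*((A*A - B)*(A*A - B))
      = (A*(A*(A*(A*(A*A)))) + A*(A*(B*B)) + B*(A*(A*B)) + B*(B*(A*A)))
        + (A*(A*(A*(A*(A*A)))) + A*(A*(B*B)) + B*(A*(A*B)) + B*(B*(A*A))) := by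
    noncomm_ring
  have hA6 : A*(A*(A*(A*(A*A)))) = 1 := by rw [haL, hA3]
  have hE8 : A*(A*(B*B)) + B*(A*(A*B)) + B*(B*(A*A)) = (trace (A*(A*B))) • B := by
    have h2 : (A*(A*(A*(A*(A*A)))) + A*(A*(B*B)) + B*(A*(A*B)) + B*(B*(A*A)))
        + (A*(A*(A*(A*(A*A)))) + A*(A*(B*B)) + B*(A*(A*B)) + B*(B*(A*A)))
        = (1 + (A*(A*(B*B)) + B*(A*(A*B)) + B*(B*(A*A))))
          + (1 + (A*(A*(B*B)) + B*(A*(A*B)) + B*(B*(A*A)))) := by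
      rw [hA6]; abel
    have h3 : (1 + (A*(A*(B*B)) + B*(A*(A*B)) + B*(B*(A*A))))
        + (1 + (A*(A*(B*B)) + B*(A*(A*B)) + B*(B*(A*A))))
        = (1 + (trace (A*(A*B))) • B) + (1 + (trace (A*(A*B))) • B) := by
      rw [← h2, ← exp8, c8p, c8m]
      module
    have h4 := half3 h3
    exact add_left_cancel h4
  -- cube relations in right-assoc form
  have hAB3r : A*(B*(A*(B*(A*B)))) = 1 := by
    have h := hAB3
    simp only [mul_assoc] at h
    exact h
  have hBA3r : B*(A*(B*(A*(B*A)))) = 1 := by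
    have h := congrArg (fun M => B*(M*(B*B))) hAB3r
    simp only [mul_assoc, one_mul, mul_one, hB3] at h
    simpa using h
  have trBAB : trace (B*(A*B)) = trace (A*(B*B)) := by
    rw [show B*(A*B) = (B*A)*B by simp only [mul_assoc], trace_mul_comm, trBBA]
  -- squares via inverses
  have q1 : trace (B*(A*(B*(B*(A*B))))) = (trace (A*(B*B)))^2 - 2*(trace (A*(A*B))) := by
    have h := tr_sq_of_inv (B*(A*B)) (A*(B*A)) ?_ ?_
    · rw [show (B*(A*B))*(B*(A*B)) = B*(A*(B*(B*(A*B)))) by simp only [mul_assoc]] at h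
      rw [h, trBAB, trABA]
    · rw [show (B*(A*B))*(A*(B*A)) = B*(A*(B*(A*(B*A)))) by simp only [mul_assoc]]
      exact hBA3r
    · simp only [det_mul, hdA, hdB, mul_one]
  have q2 : trace (A*(B*(B*(A*(B*B))))) = (trace (A*(B*B)))^2 - 2*(trace (A*(A*B))) := by
    have h := tr_sq_of_inv (A*(B*B)) (B*(A*A)) ?_ ?_
    · rw [show (A*(B*B))*(A*(B*B)) = A*(B*(B*(A*(B*B)))) by simp only [mul_assoc]] at h
      rw [h, trBAA]
    · rw [show (A*(B*B))*(B*(A*A)) = A*(B*(B*(B*(A*A)))) by simp only [mul_assoc], hbL]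
      exact hA3
    · simp only [det_mul, hdA, hdB, mul_one]
  have q3 : trace (A*(A*(B*(A*(A*B))))) = (trace (A*(A*B)))^2 - 2*(trace (A*(B*B))) := by
    have h := tr_sq_of_inv (A*(B*A)) (B*(A*B)) ?_ ?_
    · rw [show (A*(B*A))*(A*(B*A)) = A*(B*(A*(A*(B*A)))) by simp only [mul_assoc]] at h
      rw [show A*(B*(A*(A*(B*A)))) = (A*(B*(A*(A*B))))*A by simp only [mul_assoc],
        trace_mul_comm] at h
      rw [show A*(A*(B*(A*(A*B)))) = A * (A*(B*(A*(A*B)))) from rfl, h, trABA, trBAB]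
    · rw [show (A*(B*A))*(B*(A*B)) = A*(B*(A*(B*(A*B)))) by simp only [mul_assoc]]
      exact hAB3r
    · simp only [det_mul, hdA, hdB, mul_one]
  -- F1 : u + v = rs - 3
  have hF1 : trace (A*(B*(A*(A*(B*B))))) + trace (A*(A*(B*(A*(B*B)))))
      = trace (A*(B*B)) * trace (A*(A*B)) - 3 := by
    have h := congrArg (fun M => trace (A*(M*(B*B)))) hE1
    simp only [mul_add, add_mul, mul_smul_comm, smul_mul_assoc, one_mul, mul_one,
      trace_add, trace_smul, smul_eq_mul, mul_assoc, haL, hbL, hA3, hB3, trace_one,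
      Fintype.card_fin, Nat.cast_ofNat] at h
    linarith [h]
  -- rotation facts
  have hBA3tr : trace (B*(A*(B*(A*(B*A))))) = 3 := by
    rw [hBA3r]; simp
  have trBABAB2 : trace (B*(A*(B*(A*(B*B))))) = trace (A*(A*B)) := by
    rw [show B*(A*(B*(A*(B*B)))) = (B*(A*(B*A)))*(B*B) by simp only [mul_assoc],
      trace_mul_comm,
      show (B*B)*(B*(A*(B*A))) = B*(B*(B*(A*(B*A)))) by simp only [mul_assoc], hbL, trABA]
  have preRot : trace (B*(B*(A*(B*(A*(B*(A*(B*B)))))))) = 3 := by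
    rw [show B*(B*(A*(B*(A*(B*(A*(B*B))))))) = (B*(B*(A*(B*(A*(B*A))))))*(B*B)
        by simp only [mul_assoc],
      trace_mul_comm,
      show (B*B)*(B*(B*(A*(B*(A*(B*A)))))) = B*(B*(B*(B*(A*(B*(A*(B*A)))))))
        by simp only [mul_assoc], hbL, hBA3tr]
  -- Tbeta1 : tr(BAB²ABAB²) = rs - 3 - v
  have hTb1 : trace (B*(A*(B*(B*(A*(B*(A*(B*B))))))))
      = trace (A*(B*B)) * trace (A*(A*B)) - 3 - trace (A*(A*(B*(A*(B*B))))) := by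
    have h := congrArg (fun M => trace (M*(B*(A*(B*(A*(B*B))))))) hE2
    simp only [mul_add, add_mul, mul_smul_comm, smul_mul_assoc, one_mul, mul_one,
      trace_add, trace_smul, smul_eq_mul, mul_assoc, haL, hbL, hA3, hB3, trace_one,
      Fintype.card_fin, Nat.cast_ofNat] at h
    rw [preRot, trBABAB2] at h
    linarith [h]
  -- tr(A²BABA) = r
  have trA2BABA : trace (A*(A*(B*(A*(B*A))))) = trace (A*(B*B)) := by
    rw [show A*(A*(B*(A*(B*A)))) = (A*(A*(B*(A*B))))*A by simp only [mul_assoc],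
      trace_mul_comm, haL, trBAB]
  -- Tm : tr(A²BAB²AB²) = rv - s² + r
  have hTm : trace (A*(A*(B*(A*(B*(B*(A*(B*B))))))))
      = trace (A*(B*B)) * trace (A*(A*(B*(A*(B*B)))))
        - (trace (A*(A*B)))^2 + trace (A*(B*B)) := by
    have h := congrArg (fun M => trace ((A*(A*(B*A)))*(M*(B*B)))) hE2
    simp only [mul_add, add_mul, mul_smul_comm, smul_mul_assoc, one_mul, mul_one,
      trace_add, trace_smul, smul_eq_mul, mul_assoc, haL, hbL, hA3, hB3, trace_one,
      Fintype.card_fin, Nat.cast_ofNat] at h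
    rw [q3, trA2BABA] at h
    linarith [h]
  -- Tk1 : tr(ABA²B²AB²)
  have hTk1 : trace (A*(B*(A*(A*(B*(B*(A*(B*B))))))))
      = trace (A*(A*B)) * ((trace (A*(B*B)))^2 - 2*(trace (A*(A*B))))
        - trace (A*(B*B))
        - (trace (A*(B*B)) * trace (A*(A*(B*(A*(B*B)))))
            - (trace (A*(A*B)))^2 + trace (A*(B*B))) := by
    have h := congrArg (fun M => trace (A*(M*(B*(B*(A*(B*B))))))) hE1
    simp only [mul_add, add_mul, mul_smul_comm, smul_mul_assoc, one_mul, mul_one,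
      trace_add, trace_smul, smul_eq_mul, mul_assoc, haL, hbL, hA3, hB3, trace_one,
      Fintype.card_fin, Nat.cast_ofNat] at h
    rw [hTm, q2] at h
    linarith [h]
  -- Th : tr(AB²A²BAB²) = rv - s² + r
  have hTh : trace (A*(B*(B*(A*(A*(B*(A*(B*B))))))))
      = trace (A*(B*B)) * trace (A*(A*(B*(A*(B*B)))))
        - (trace (A*(A*B)))^2 + trace (A*(B*B)) := by
    have h := congrArg (fun M => trace (A*(M*(B*(A*(B*B)))))) hE8
    simp only [mul_add, add_mul, mul_smul_comm, smul_mul_assoc, one_mul, mul_one,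
      trace_add, trace_smul, smul_eq_mul, mul_assoc, haL, hbL, hA3, hB3, trace_one,
      Fintype.card_fin, Nat.cast_ofNat] at h
    rw [hTk1, q2] at h
    linarith [h]
  -- Tb2 : tr(A²B²ABAB²) = s² - 2r
  have hTb2 : trace (A*(A*(B*(B*(A*(B*(A*(B*B))))))))
      = (trace (A*(A*B)))^2 - 2*(trace (A*(B*B))) := by
    have h := congrArg (fun M => trace (M*(A*(B*(A*(B*B)))))) hE5
    simp only [mul_add, add_mul, mul_smul_comm, smul_mul_assoc, one_mul, mul_one,
      trace_add, trace_smul, smul_eq_mul, mul_assoc, haL, hbL, hA3, hB3, trace_one,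
      Fintype.card_fin, Nat.cast_ofNat] at h
    rw [hTh] at h
    linarith [h]
  -- Tgamma : tr(A²BA²B²ABAB²) = s³-2rs-u-v
  have hTg : trace (A*(A*(B*(A*(A*(B*(B*(A*(B*(A*(B*B)))))))))))
      = trace (A*(A*B)) * ((trace (A*(A*B)))^2 - 2*(trace (A*(B*B))))
        - trace (A*(A*(B*(A*(B*B)))))
        - trace (B*(A*(B*(B*(A*(B*(A*(B*B)))))))) := by
    have h := congrArg (fun M => trace ((A*A)*(M*(B*(B*(A*(B*(A*(B*B))))))))) hE1
    simp only [mul_add, add_mul, mul_smul_comm, smul_mul_assoc, one_mul, mul_one,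
      trace_add, trace_smul, smul_eq_mul, mul_assoc, haL, hbL, hA3, hB3, trace_one,
      Fintype.card_fin, Nat.cast_ofNat] at h
    rw [hTb2] at h
    linarith [h]
  -- rotation: tr(A²B²AB) = u
  have rotu : trace (A*(A*(B*(B*(A*B))))) = trace (A*(B*(A*(A*(B*B))))) := by
    rw [show A*(A*(B*(B*(A*B)))) = (A*(A*(B*B)))*(A*B) by simp only [mul_assoc],
      trace_mul_comm]
    simp only [mul_assoc]
  -- Talpha : tr(A²BA²B²AB) = su+s-r²
  have hTa : trace (A*(A*(B*(A*(A*(B*(B*(A*B))))))))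
      = trace (A*(A*B)) * trace (A*(B*(A*(A*(B*B)))))
        + trace (A*(A*B)) - (trace (A*(B*B)))^2 := by
    have h := congrArg (fun M => trace ((A*A)*(M*(B*(B*(A*B)))))) hE1
    simp only [mul_add, add_mul, mul_smul_comm, smul_mul_assoc, one_mul, mul_one,
      trace_add, trace_smul, smul_eq_mul, mul_assoc, haL, hbL, hA3, hB3, trace_one,
      Fintype.card_fin, Nat.cast_ofNat] at h
    rw [q1, rotu] at h
    linarith [h]
  -- K1 : K + L + 1 = r ABA
  have hK1sum : A*(B*(A*(A*(B*B)))) + A*(B*(A*(B*(B*A)))) + 1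
      = (trace (A*(B*B))) • (A*(B*A)) := by
    have h := congrArg (fun M => (A*B)*M) hE5
    simp only [mul_add, mul_smul_comm, mul_assoc, hbL, hA3] at h
    exact h
  -- rotations for the final assembly
  have rotv : trace (B*(A*(B*(B*(A*A))))) = trace (A*(A*(B*(A*(B*B))))) := by
    rw [show B*(A*(B*(B*(A*A)))) = (B*(A*(B*B)))*(A*A) by simp only [mul_assoc],
      trace_mul_comm]
    simp only [mul_assoc]
  have rotKL : trace (A*(B*(A*(A*(B*(B*(A*(B*(A*(B*(B*A)))))))))))
      = trace (A*(A*(B*(A*(A*(B*(B*(A*(B*(A*(B*B))))))))))) := by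
    rw [show A*(B*(A*(A*(B*(B*(A*(B*(A*(B*(B*A))))))))))
        = (A*(B*(A*(A*(B*(B*(A*(B*(A*(B*B))))))))))*A by simp only [mul_assoc],
      trace_mul_comm]
  have rotKABA : trace (A*(B*(A*(A*(B*(B*(A*(B*A))))))))
      = trace (A*(A*(B*(A*(A*(B*(B*(A*B)))))))) := by
    rw [show A*(B*(A*(A*(B*(B*(A*(B*A)))))))
        = (A*(B*(A*(A*(B*(B*(A*B)))))))*A by simp only [mul_assoc],
      trace_mul_comm]
  -- assembly : tr(K²) + tr(KL) + tr(K) = r tr(K·ABA)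
  have hKKeq : trace (A*(B*(A*(A*(B*(B*(A*(B*(A*(A*(B*B)))))))))))
        + trace (A*(A*(B*(A*(A*(B*(B*(A*(B*(A*(B*B)))))))))))
        + trace (A*(B*(A*(A*(B*B)))))
      = trace (A*(B*B)) * trace (A*(A*(B*(A*(A*(B*(B*(A*B)))))))) := by
    have h := congrArg (fun M => trace ((A*(B*(A*(A*(B*B)))))*M)) hK1sum
    simp only [mul_add, add_mul, mul_smul_comm, smul_mul_assoc, one_mul, mul_one,
      trace_add, trace_smul, smul_eq_mul, mul_assoc, haL, hbL, hA3, hB3] at h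
    rw [rotKL, rotKABA] at h
    linarith [h]
  -- tr(K²) = u² - 2v
  have hKK2 : trace (A*(B*(A*(A*(B*(B*(A*(B*(A*(A*(B*B)))))))))))
      = (trace (A*(B*(A*(A*(B*B))))))^2 - 2 * trace (A*(A*(B*(A*(B*B))))) := by
    have h := tr_sq_of_inv (A*(B*(A*(A*(B*B))))) (B*(A*(B*(B*(A*A))))) ?_ ?_
    · rw [show (A*(B*(A*(A*(B*B)))))*(A*(B*(A*(A*(B*B)))))
          = A*(B*(A*(A*(B*(B*(A*(B*(A*(A*(B*B)))))))))) by simp only [mul_assoc]] at h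
      rw [h, rotv]
    · show (A*(B*(A*(A*(B*B)))))*(B*(A*(B*(B*(A*A))))) = 1
      have : (A*(B*(A*(A*(B*B)))))*(B*(A*(B*(B*(A*A)))))
          = A*(B*(A*(A*(B*(B*(B*(A*(B*(B*(A*A)))))))))) := by simp only [mul_assoc]
      rw [this, hbL, haL, hbL]
      exact hA3
    · simp only [det_mul, hdA, hdB, mul_one]
  -- final algebra
  linear_combination 2*hF1 + trace (A*(B*B)) * hTa - hTg + hTb1 + hKKeq - hKK2

lemma tr_order3 (M : Matrix (Fin 3) (Fin 3) ℝ) (h3 : M * (M * M) = 1) (hd : det M = 1)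
    (h1 : M ≠ 1) : trace M = 0 ∧ trace (M * M) = 0 := by
  have hc := ch3 M
  rw [h3, hd, one_smul] at hc
  have h0 : (trace M) • (M * M) = (((trace M)^2 - trace (M * M))/2) • M :=
    sub_eq_zero.mp (add_eq_right.mp hc.symm)
  set t := trace M with hts
  set e := ((trace M)^2 - trace (M * M))/2 with hes
  by_cases ht : t = 0
  · rw [ht, zero_smul] at h0
    rcases smul_eq_zero.mp h0.symm with he | hM
    · refine ⟨ht, ?_⟩
      have ht' : M.trace = 0 := ht
      rw [hes, ht'] at he
      linarith
    · exfalso; rw [hM] at hd; simp at hd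
  · exfalso
    have hMM : M * M = (e/t) • M := by
      have := congrArg (fun P => t⁻¹ • P) h0
      simpa [smul_smul, inv_mul_cancel₀ ht, div_eq_inv_mul] using this
    have hcube : (1 : Matrix (Fin 3) (Fin 3) ℝ) = ((e/t)^2) • M := by
      rw [← h3, hMM, mul_smul_comm, hMM, smul_smul]; ring_nf
    by_cases he : e = 0
    · rw [he] at hMM
      simp only [zero_div, zero_smul] at hMM
      have : det (M * M) = 0 := by rw [hMM]; simp
      rw [det_mul, hd] at this; norm_num at this
    · have hc0 : (e/t)^2 ≠ 0 := pow_ne_zero _ (div_ne_zero he ht)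
      have hM1 : M = ((e/t)^2)⁻¹ • 1 := by
        have := congrArg (fun P => ((e/t)^2)⁻¹ • P) hcube
        simpa [smul_smul, inv_mul_cancel₀ hc0, eq_comm] using this
      set d := ((e/t)^2)⁻¹ with hds
      have hd3 : d^3 = 1 := by
        have := hd
        rw [hM1] at this
        simpa [det_smul, Fintype.card_fin] using this
      have hdpos : d = 1 := by nlinarith [sq_nonneg (d+1), sq_nonneg (d-1), sq_nonneg d]
      rw [hdpos, one_smul] at hM1
      exact h1 hM1

end TurnoverProofAux

/-- The generator `a` of `Γ`. -/
def ga : TurnoverGroup := PresentedGroup.of 0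

/-- The generator `b` of `Γ`. -/
def gb : TurnoverGroup := PresentedGroup.of 1

namespace TurnoverProofAux

lemma rel_one {r : FreeGroup (Fin 2)} (hr : r ∈ turnoverRels) :
    PresentedGroup.mk turnoverRels r = 1 :=
  (QuotientGroup.eq_one_iff r).mpr (Subgroup.subset_normalClosure hr)

lemma ga_cube : ga ^ 3 = 1 := by
  have h : ga ^ 3 = PresentedGroup.mk turnoverRels (FreeGroup.of 0 ^ 3) := by
    rw [map_pow]; rfl
  rw [h, rel_one]; left; rfl

lemma gb_cube : gb ^ 3 = 1 := by
  have h : gb ^ 3 = PresentedGroup.mk turnoverRels (FreeGroup.of 1 ^ 3) := by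
    rw [map_pow]; rfl
  rw [h, rel_one]; right; left; rfl

lemma gab_cube : (ga * gb) ^ 3 = 1 := by
  have h : (ga * gb) ^ 3
      = PresentedGroup.mk turnoverRels ((FreeGroup.of 0 * FreeGroup.of 1) ^ 3) := by
    rw [map_pow, _root_.map_mul]; rfl
  rw [h, rel_one]; right; right; rfl

end TurnoverProofAux

open TurnoverProofAux in
/-- Lawton's trace relation specialized to the turnover group: for an `SL(3,ℝ)`
representation with `ρ(a) ≠ I`, `ρ(b) ≠ I`, `ρ(ab) ≠ I`, the traces
`r = tr ρ(ab⁻¹)`, `s = tr ρ(a⁻¹b)` and `τ = tr ρ(aba⁻¹b⁻¹)` satisfy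
`τ² − (rs − 3)τ + r³ + s³ − 6rs + 9 = 0`. -/
theorem turnover_trace_relation
    (ρ : TurnoverGroup →* Matrix.SpecialLinearGroup (Fin 3) ℝ)
    (ha : ρ ga ≠ 1) (hb : ρ gb ≠ 1) (hab : ρ (ga * gb) ≠ 1) :
    let r : ℝ := Matrix.trace (ρ (ga * gb⁻¹) : Matrix (Fin 3) (Fin 3) ℝ)
    let s : ℝ := Matrix.trace (ρ (ga⁻¹ * gb) : Matrix (Fin 3) (Fin 3) ℝ)
    let τ : ℝ := Matrix.trace (ρ (ga * gb * ga⁻¹ * gb⁻¹) : Matrix (Fin 3) (Fin 3) ℝ)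
    τ ^ 2 - (r * s - 3) * τ + r ^ 3 + s ^ 3 - 6 * (r * s) + 9 = 0 := by
  intro r s τ
  set SA := ρ ga with hSA
  set SB := ρ gb with hSB
  have hSA3 : SA ^ 3 = 1 := by rw [hSA, ← map_pow, ga_cube, _root_.map_one]
  have hSB3 : SB ^ 3 = 1 := by rw [hSB, ← map_pow, gb_cube, _root_.map_one]
  have hSAB3 : (SA * SB) ^ 3 = 1 := by
    rw [hSA, hSB, ← _root_.map_mul, ← map_pow, gab_cube, _root_.map_one]
  have hAinv : SA⁻¹ = SA ^ 2 := by
    apply inv_eq_of_mul_eq_one_right; rw [← pow_succ']; exact hSA3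
  have hBinv : SB⁻¹ = SB ^ 2 := by
    apply inv_eq_of_mul_eq_one_right; rw [← pow_succ']; exact hSB3
  set A : Matrix (Fin 3) (Fin 3) ℝ := ↑SA with hA
  set B : Matrix (Fin 3) (Fin 3) ℝ := ↑SB with hB
  have hA3 : A * (A * A) = 1 := by
    rw [hA, ← Matrix.SpecialLinearGroup.coe_mul, ← Matrix.SpecialLinearGroup.coe_mul,
      show SA * (SA * SA) = SA ^ 3 by rw [pow_succ', pow_succ', pow_one],
      hSA3, Matrix.SpecialLinearGroup.coe_one]
  have hB3 : B * (B * B) = 1 := by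
    rw [hB, ← Matrix.SpecialLinearGroup.coe_mul, ← Matrix.SpecialLinearGroup.coe_mul,
      show SB * (SB * SB) = SB ^ 3 by rw [pow_succ', pow_succ', pow_one],
      hSB3, Matrix.SpecialLinearGroup.coe_one]
  have hAB3 : (A*B) * ((A*B) * (A*B)) = 1 := by
    rw [hA, hB, ← Matrix.SpecialLinearGroup.coe_mul, ← Matrix.SpecialLinearGroup.coe_mul,
      ← Matrix.SpecialLinearGroup.coe_mul,
      show SA * SB * (SA * SB * (SA * SB)) = (SA * SB) ^ 3 by
        rw [pow_succ', pow_succ', pow_one],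
      hSAB3, Matrix.SpecialLinearGroup.coe_one]
  have hAne : A ≠ 1 := by
    rw [hA, ← Matrix.SpecialLinearGroup.coe_one]
    exact fun h => ha (Subtype.coe_injective h)
  have hBne : B ≠ 1 := by
    rw [hB, ← Matrix.SpecialLinearGroup.coe_one]
    exact fun h => hb (Subtype.coe_injective h)
  have hABne : A * B ≠ 1 := by
    rw [hA, hB, ← Matrix.SpecialLinearGroup.coe_mul, ← Matrix.SpecialLinearGroup.coe_one]
    intro h
    apply hab
    have h2 : ρ (ga * gb) = 1 := by
      rw [_root_.map_mul]
      exact Subtype.coe_injective h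
    exact h2
  have hdA : det A = 1 := SA.2
  have hdB : det B = 1 := SB.2
  obtain ⟨htA, htA2⟩ := tr_order3 A hA3 hdA hAne
  obtain ⟨htB, htB2⟩ := tr_order3 B hB3 hdB hBne
  obtain ⟨htAB, htAB2⟩ := tr_order3 (A*B) hAB3 (by rw [det_mul, hdA, hdB, mul_one]) hABne
  have hrr : r = trace (A*(B*B)) := by
    show trace ((ρ (ga * gb⁻¹) : Matrix (Fin 3) (Fin 3) ℝ)) = _
    rw [_root_.map_mul, map_inv, hBinv, ← hSA, Matrix.SpecialLinearGroup.coe_mul,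
      Matrix.SpecialLinearGroup.coe_pow, pow_two, ← hA, ← hB]
  have hss : s = trace (A*(A*B)) := by
    show trace ((ρ (ga⁻¹ * gb) : Matrix (Fin 3) (Fin 3) ℝ)) = _
    rw [_root_.map_mul, map_inv, hAinv, ← hSB, Matrix.SpecialLinearGroup.coe_mul,
      Matrix.SpecialLinearGroup.coe_pow, pow_two, ← hA, ← hB, mul_assoc]
  have htt : τ = trace (A*(B*(A*(A*(B*B))))) := by
    show trace ((ρ (ga * gb * ga⁻¹ * gb⁻¹) : Matrix (Fin 3) (Fin 3) ℝ)) = _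
    rw [_root_.map_mul, _root_.map_mul, _root_.map_mul, map_inv, map_inv, hAinv, hBinv,
      ← hSA, ← hSB]
    rw [Matrix.SpecialLinearGroup.coe_mul, Matrix.SpecialLinearGroup.coe_mul,
      Matrix.SpecialLinearGroup.coe_mul, Matrix.SpecialLinearGroup.coe_pow,
      Matrix.SpecialLinearGroup.coe_pow, pow_two, pow_two, ← hA, ← hB]
    simp only [mul_assoc]
  rw [hrr, hss, htt]
  exact key hA3 hB3 hAB3 hdA hdB htA htA2 htB htB2 htAB htAB2
end

section
/- For x = (x₁,x₂,x₃) ∈ ℝ³ with x₁x₂x₃ = 1, let D_x = diag(x₁,x₂,x₃,1) and let P be the 4×4 matrix given by the permutation matrix of the 3-cycle (1 2 3) in the first three coordinates, direct sum with 1. Let ρ_x : Γ → SL(4,ℝ) be the homomorphism with ρ_x(a) = P and ρ_x(a²b) = D_x. Then: (i) if x' is obtained from x by a cyclic permutation of (x₁,x₂,x₃), there exists g ∈ SL(4,ℝ) with g·ρ_x(γ)·g⁻¹ = ρ_{x'}(γ) for all γ ∈ Γ; and (ii) if there exists g ∈ SL(4,ℝ) with g·ρ_x(γ)·g⁻¹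 = ρ_{x'}(γ) for all γ ∈ Γ, then the multisets {x₁,x₂,x₃} and {x₁',x₂',x₃'} coincide. -/
open Matrix

/-- The diagonal matrix `D_x = diag(x₁, x₂, x₃, 1)`. -/
def Ddiag (x₁ x₂ x₃ : ℝ) : Matrix (Fin 4) (Fin 4) ℝ :=
  !![x₁, 0, 0, 0;
     0, x₂, 0, 0;
     0, 0, x₃, 0;
     0, 0, 0, 1]

/-- The permutation matrix of the 3-cycle `(1 2 3)` in the first three coordinates,
direct sum with `1`. -/
def Pperm : Matrix (Fin 4) (Fin 4) ℝ :=
  !![0, 0, 1, 0;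
     1, 0, 0, 0;
     0, 1, 0, 0;
     0, 0, 0, 1]

open Polynomial in
lemma aux_PD (y₁ y₂ y₃ : ℝ) : Pperm * Ddiag y₁ y₂ y₃ = Ddiag y₃ y₁ y₂ * Pperm := by
  ext i j
  fin_cases i <;> fin_cases j <;>
    simp [Pperm, Ddiag, Matrix.mul_apply, Fin.sum_univ_four, Matrix.vecHead, Matrix.vecTail]

lemma aux_Ddiag_eq (y₁ y₂ y₃ : ℝ) : Ddiag y₁ y₂ y₃ = Matrix.diagonal ![y₁, y₂, y₃, 1] := by
  ext i j
  fin_cases i <;> fin_cases j <;>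
    simp [Ddiag, Matrix.diagonal, Matrix.vecHead, Matrix.vecTail]

open Polynomial in
lemma aux_charpoly_semiconj {M A B : Matrix (Fin 4) (Fin 4) ℝ} (hM : M.det = 1)
    (h : M * A = B * M) : A.charpoly = B.charpoly := by
  have hc : (C : ℝ →+* ℝ[X]).mapMatrix M * charmatrix A
      = charmatrix B * (C : ℝ →+* ℝ[X]).mapMatrix M := by
    have hcm : Commute (Matrix.scalar (Fin 4) (X : ℝ[X]))
        ((C : ℝ →+* ℝ[X]).mapMatrix M) :=
      Matrix.scalar_commute _ (fun r' => Commute.all _ _) _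
    simp only [charmatrix, mul_sub, sub_mul, ← RingHom.map_mul, h]
    rw [hcm.eq]
  have hdet := congrArg Matrix.det hc
  rw [Matrix.det_mul, Matrix.det_mul, ← RingHom.map_det, hM, RingHom.map_one,
    one_mul, mul_one] at hdet
  exact hdet

open Polynomial in
lemma aux_charpoly_roots (y₁ y₂ y₃ : ℝ) :
    (Ddiag y₁ y₂ y₃).charpoly.roots = ({y₁, y₂, y₃, 1} : Multiset ℝ) := by
  have ht : (Ddiag y₁ y₂ y₃).BlockTriangular id := by
    rw [aux_Ddiag_eq]; exact Matrix.blockTriangular_diagonal _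
  rw [Matrix.charpoly_of_upperTriangular _ ht]
  have : ∏ i : Fin 4, (X - C (Ddiag y₁ y₂ y₃ i i))
      = (({y₁, y₂, y₃, 1} : Multiset ℝ).map fun a => X - C a).prod := by
    simp [Fin.prod_univ_four, Ddiag, mul_assoc]
  rw [this, Polynomial.roots_multiset_prod_X_sub_C]

/-- The representations `ρ_x` with `ρ_x(a) = P`, `ρ_x(a²b) = D_x` (for `x₁x₂x₃ = 1`) are
conjugate in `SL(4,ℝ)` for cyclic permutations of `(x₁,x₂,x₃)`, and conversely two such
representations are conjugate in `SL(4,ℝ)` only if the multisets `{x₁,x₂,x₃}` and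
`{x₁',x₂',x₃'}` coincide. -/
theorem cyclic_conjugacy_of_diagonal_reps
    (x₁ x₂ x₃ x₁' x₂' x₃' : ℝ) (hx : x₁ * x₂ * x₃ = 1) (hx' : x₁' * x₂' * x₃' = 1)
    (ρ ρ' : TurnoverGroup →* Matrix.SpecialLinearGroup (Fin 4) ℝ)
    (hρa : (ρ ga : Matrix (Fin 4) (Fin 4) ℝ) = Pperm)
    (hρab : (ρ (ga ^ 2 * gb) : Matrix (Fin 4) (Fin 4) ℝ) = Ddiag x₁ x₂ x₃)
    (hρ'a : (ρ' ga : Matrix (Fin 4) (Fin 4) ℝ) = Pperm)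
    (hρ'ab : (ρ' (ga ^ 2 * gb) : Matrix (Fin 4) (Fin 4) ℝ) = Ddiag x₁' x₂' x₃') :
    (((x₁', x₂', x₃') = (x₁, x₂, x₃) ∨ (x₁', x₂', x₃') = (x₂, x₃, x₁) ∨
        (x₁', x₂', x₃') = (x₃, x₁, x₂)) →
      ∃ g : Matrix.SpecialLinearGroup (Fin 4) ℝ, ∀ γ : TurnoverGroup,
        g * ρ γ * g⁻¹ = ρ' γ) ∧
    ((∃ g : Matrix.SpecialLinearGroup (Fin 4) ℝ, ∀ γ : TurnoverGroup,
        g * ρ γ * g⁻¹ = ρ' γ) →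
      ({x₁, x₂, x₃} : Multiset ℝ) = ({x₁', x₂', x₃'} : Multiset ℝ)) := by
  constructor
  · intro hcase
    have hAA' : ρ' ga = ρ ga := Subtype.ext (by rw [hρ'a, hρa])
    obtain ⟨g, hg1, hg2⟩ :
        ∃ g : Matrix.SpecialLinearGroup (Fin 4) ℝ,
          Commute g (ρ ga) ∧ g * ρ (ga ^ 2 * gb) = ρ' (ga ^ 2 * gb) * g := by
      rcases hcase with h | h | h <;>
        simp only [Prod.mk.injEq] at h <;> obtain ⟨h1, h2, h3⟩ := h <;> subst h1 h2 h3
      · exact ⟨1, Commute.one_left _, by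
          rw [one_mul, mul_one]
          exact Subtype.ext (by rw [hρab, hρ'ab])⟩
      · refine ⟨ρ ga * ρ ga, (Commute.refl (ρ ga)).mul_left (Commute.refl (ρ ga)), ?_⟩
        apply Subtype.ext
        rw [Matrix.SpecialLinearGroup.coe_mul, Matrix.SpecialLinearGroup.coe_mul,
          Matrix.SpecialLinearGroup.coe_mul, Matrix.SpecialLinearGroup.coe_mul,
          hρa, hρab, hρ'ab, mul_assoc, aux_PD, ← mul_assoc, aux_PD, mul_assoc]
      · refine ⟨ρ ga, Commute.refl _, ?_⟩
        apply Subtype.ext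
        rw [Matrix.SpecialLinearGroup.coe_mul, Matrix.SpecialLinearGroup.coe_mul,
          hρa, hρab, hρ'ab, aux_PD]
    refine ⟨g, ?_⟩
    have hext : ((MulAut.conj g).toMonoidHom.comp ρ : TurnoverGroup →*
        Matrix.SpecialLinearGroup (Fin 4) ℝ) = ρ' := by
      apply PresentedGroup.ext
      intro x
      fin_cases x
      · show g * ρ ga * g⁻¹ = ρ' ga
        rw [hAA', hg1.eq, mul_inv_cancel_right]
      · show g * ρ gb * g⁻¹ = ρ' gb
        have hgb : (gb : TurnoverGroup) = (ga ^ 2)⁻¹ * (ga ^ 2 * gb) := by group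
        have hc2 : Commute g ((ρ ga ^ 2)⁻¹) := (hg1.pow_right 2).inv_right
        rw [hgb, _root_.map_mul ρ, _root_.map_inv ρ, _root_.map_pow ρ, _root_.map_mul ρ', _root_.map_inv ρ', _root_.map_pow ρ', hAA']
        calc g * ((ρ ga ^ 2)⁻¹ * ρ (ga ^ 2 * gb)) * g⁻¹
            = (g * (ρ ga ^ 2)⁻¹ * g⁻¹) * (g * ρ (ga ^ 2 * gb) * g⁻¹) := by group
          _ = (ρ ga ^ 2)⁻¹ * ρ' (ga ^ 2 * gb) := by
              rw [hc2.eq, mul_inv_cancel_right, hg2, mul_inv_cancel_right]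
    intro γ
    have := DFunLike.congr_fun hext γ
    simpa [MulAut.conj_apply] using this
  · rintro ⟨g, hg⟩
    have h := hg (ga ^ 2 * gb)
    have h2 : g * ρ (ga ^ 2 * gb) = ρ' (ga ^ 2 * gb) * g := by
      rw [← h]; group
    have hm : (g : Matrix (Fin 4) (Fin 4) ℝ) * Ddiag x₁ x₂ x₃
        = Ddiag x₁' x₂' x₃' * (g : Matrix (Fin 4) (Fin 4) ℝ) := by
      have := congrArg Subtype.val h2
      rwa [Matrix.SpecialLinearGroup.coe_mul, Matrix.SpecialLinearGroup.coe_mul,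
        hρab, hρ'ab] at this
    have hcp := aux_charpoly_semiconj g.prop hm
    have hr : ({x₁, x₂, x₃, 1} : Multiset ℝ) = {x₁', x₂', x₃', 1} := by
      rw [← aux_charpoly_roots x₁ x₂ x₃, ← aux_charpoly_roots x₁' x₂' x₃', hcp]
    have e : ∀ a b c : ℝ, ({a, b, c, 1} : Multiset ℝ) = 1 ::ₘ {a, b, c} := by
      intro a b c
      show a ::ₘ b ::ₘ c ::ₘ (1 : ℝ) ::ₘ 0 = (1 : ℝ) ::ₘ a ::ₘ b ::ₘ c ::ₘ 0
      rw [Multiset.cons_swap c, Multiset.cons_swap b, Multiset.cons_swap a]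
    rw [e, e] at hr
    exact (Multiset.cons_inj_right (1 : ℝ)).mp hr
end

section
/- For x > 0 let C_x = diag(x, 1, 1, 1/x) ∈ SL(4,ℝ). Then: (i) C_x·Ω(1,2π/3)·C_x⁻¹ = Ω(1,2π/3) for all x > 0; and (ii) C_x·M(1,0)·C_x⁻¹ tends to the identity matrix I₄ as x → 0⁺. Consequently, if ρ_hyp : Γ → SL(4,ℝ) is a homomorphism with ρ_hyp(a) = Ω(1,2π/3) and ρ_hyp(a²b) = M(1,0), and ρ_red : Γ → SL(4,ℝ) is the homomorphism with ρ_red(a) = Ω(1,2π/3) and ρ_red(a²b) = I₄, then for every γ ∈ Γ, C_x·ρ_hyp(γ)·C_x⁻¹ tends to ρ_red(γ) as x → 0⁺. -/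
/-!
Conjugation by `C_x = diag(x, 1, 1, 1/x)` fixes `Ω`, which only rotates the middle block, and
rescales the cusp: `C_x M(a,b) C_x⁻¹ = M(xa, xb)`, which tends to `M(0,0) = 1` as `x → 0`.
Since conjugation is multiplicative, the `γ` with `C_x ρ_hyp(γ) C_x⁻¹ → ρ_red(γ)` form a
submonoid of `Γ`. It contains `a` and `a²b`, hence `b = a · a²b`; as the generators of `Γ` have
finite order, the submonoid they generate is all of `Γ`.
-/

open Matrix Real Filter Topology

/-- The degeneration family `C_x = diag(x, 1, 1, 1/x)`. -/
noncomputable def Cdeg (x : ℝ) : Matrix (Fin 4) (Fin 4) ℝ :=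
  !![x, 0, 0, 0;
     0, 1, 0, 0;
     0, 0, 1, 0;
     0, 0, 0, 1 / x]

/-- The inverse family `C_x⁻¹ = diag(1/x, 1, 1, x)`. -/
noncomputable def CdegInv (x : ℝ) : Matrix (Fin 4) (Fin 4) ℝ :=
  !![1 / x, 0, 0, 0;
     0, 1, 0, 0;
     0, 0, 1, 0;
     0, 0, 0, x]

section ConjugateLimits

variable {G R ι : Type*} [Monoid G] [Monoid R] [TopologicalSpace R] [ContinuousMul R]

def conjLimitSubmonoid (l : Filter ι) {c c' : ι → R}
    (hc : ∀ᶠ i in l, c i * c' i = 1 ∧ c' i * c i = 1) (ρ σ : G →* R) : Submonoid G where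
  carrier := {γ | Tendsto (fun i => c i * ρ γ * c' i) l (𝓝 (σ γ))}
  one_mem' := by
    refine tendsto_const_nhds.congr' (hc.mono fun i hi => ?_)
    simp [hi.1]
  mul_mem' := by
    intro γ δ hγ hδ
    refine (map_mul σ γ δ ▸ hγ.mul hδ).congr' (hc.mono fun i hi => ?_)
    calc c i * ρ γ * c' i * (c i * ρ δ * c' i) = c i * ρ γ * (c' i * c i) * ρ δ * c' i := by
          simp only [mul_assoc]
      _ = c i * ρ (γ * δ) * c' i := by rw [hi.2, mul_one, map_mul, mul_assoc (c i)]

theorem mem_conjLimitSubmonoid {l : Filter ι} {c c' : ι → R}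
    {hc : ∀ᶠ i in l, c i * c' i = 1 ∧ c' i * c i = 1} {ρ σ : G →* R} {γ : G} :
    γ ∈ conjLimitSubmonoid l hc ρ σ ↔
      Tendsto (fun i => c i * ρ γ * c' i) l (𝓝 (σ γ)) :=
  Iff.rfl

end ConjugateLimits

theorem PresentedGroup.submonoid_closure_range_of {α : Type*} {rels : Set (FreeGroup α)}
    (h : ∀ i, IsOfFinOrder (PresentedGroup.of i : PresentedGroup rels)) :
    Submonoid.closure (Set.range (PresentedGroup.of : α → PresentedGroup rels)) = ⊤ := by
  rw [← Subgroup.closure_toSubmonoid_of_isOfFinOrder (Set.forall_mem_range.mpr h),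
    PresentedGroup.closure_range_of, Subgroup.top_toSubmonoid]

theorem Cdeg_mul_CdegInv {x : ℝ} (hx : x ≠ 0) : Cdeg x * CdegInv x = 1 := by
  ext i j
  fin_cases i <;> fin_cases j <;>
    simp [Cdeg, CdegInv, Matrix.mul_apply, Fin.sum_univ_four, hx]

theorem CdegInv_mul_Cdeg {x : ℝ} (hx : x ≠ 0) : CdegInv x * Cdeg x = 1 := by
  ext i j
  fin_cases i <;> fin_cases j <;>
    simp [Cdeg, CdegInv, Matrix.mul_apply, Fin.sum_univ_four, hx]

theorem det_Cdeg {x : ℝ} (hx : x ≠ 0) : (Cdeg x).det = 1 := by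
  simp [Cdeg, Matrix.det_succ_row_zero, Fin.sum_univ_succ, hx]

theorem Cdeg_mul_Omega_mul_CdegInv {x : ℝ} (hx : x ≠ 0) :
    Cdeg x * Omega * CdegInv x = Omega := by
  ext i j
  fin_cases i <;> fin_cases j <;>
    simp [Cdeg, CdegInv, Omega, Matrix.mul_apply, Fin.sum_univ_four, hx]

theorem Cdeg_mul_Mcusp_mul_CdegInv {x : ℝ} (hx : x ≠ 0) (a b : ℝ) :
    Cdeg x * Mcusp a b * CdegInv x = Mcusp (x * a) (x * b) := by
  ext i j
  fin_cases i <;> fin_cases j <;>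
    simp [Cdeg, CdegInv, Mcusp, Matrix.mul_apply, Fin.sum_univ_four, hx] <;> ring

theorem Mcusp_zero_zero : Mcusp 0 0 = 1 := by
  ext i j
  fin_cases i <;> fin_cases j <;> simp [Mcusp]

theorem continuous_Mcusp : Continuous fun p : ℝ × ℝ => Mcusp p.1 p.2 := by
  unfold Mcusp
  fun_prop

theorem tendsto_Cdeg_mul_Mcusp_mul_CdegInv (a b : ℝ) :
    Tendsto (fun x : ℝ => Cdeg x * Mcusp a b * CdegInv x) (𝓝[≠] 0) (𝓝 1) := by
  have hlim : Tendsto (fun x : ℝ => Mcusp (x * a) (x * b)) (𝓝 0) (𝓝 1) := by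
    rw [← Mcusp_zero_zero]
    exact (continuous_Mcusp.comp (by fun_prop : Continuous fun x : ℝ => (x * a, x * b))).tendsto'
      0 _ (by simp)
  exact (hlim.mono_left nhdsWithin_le_nhds).congr' <| eventually_mem_nhdsWithin.mono
    fun x hx => (Cdeg_mul_Mcusp_mul_CdegInv hx a b).symm

theorem TurnoverGroup.of_pow_three (i : Fin 2) : (PresentedGroup.of i : TurnoverGroup) ^ 3 = 1 := by
  rw [PresentedGroup.of, ← map_pow]
  exact PresentedGroup.one_of_mem (by fin_cases i <;> simp [turnoverRels])

theorem TurnoverGroup.ga_pow_three : ga ^ 3 = 1 :=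
  of_pow_three 0

theorem TurnoverGroup.mem_of_ga_mem_of_gb_mem {S : Submonoid TurnoverGroup} (ha : ga ∈ S)
    (hb : gb ∈ S) (γ : TurnoverGroup) : γ ∈ S := by
  have hclosure := PresentedGroup.submonoid_closure_range_of fun i =>
    isOfFinOrder_iff_pow_eq_one.mpr ⟨3, three_pos, TurnoverGroup.of_pow_three i⟩
  refine Submonoid.closure_le.mpr ?_ (hclosure ▸ Submonoid.mem_top γ)
  rintro _ ⟨i, rfl⟩
  fin_cases i
  exacts [ha, hb]

/-- Conjugating by `C_x = diag(x,1,1,1/x)` fixes `Ω(1,2π/3)` and degenerates `M(1,0)` to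
the identity as `x → 0⁺`; consequently the reducible representation `ρ_red` lies in the
closure of the conjugation orbit of the hyperbolic holonomy `ρ_hyp`. -/
theorem degeneration_to_reducible :
    (∀ x : ℝ, 0 < x → (Cdeg x).det = 1 ∧ Cdeg x * CdegInv x = 1 ∧
        Cdeg x * Omega * CdegInv x = Omega) ∧
    Tendsto (fun x : ℝ => Cdeg x * Mcusp 1 0 * CdegInv x) (𝓝[>] 0)
      (𝓝 (1 : Matrix (Fin 4) (Fin 4) ℝ)) ∧
    ∀ ρhyp ρred : TurnoverGroup →* Matrix.SpecialLinearGroup (Fin 4) ℝ,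
      (ρhyp ga : Matrix (Fin 4) (Fin 4) ℝ) = Omega →
      (ρhyp (ga ^ 2 * gb) : Matrix (Fin 4) (Fin 4) ℝ) = Mcusp 1 0 →
      (ρred ga : Matrix (Fin 4) (Fin 4) ℝ) = Omega →
      (ρred (ga ^ 2 * gb) : Matrix (Fin 4) (Fin 4) ℝ) = 1 →
      ∀ γ : TurnoverGroup,
        Tendsto (fun x : ℝ => Cdeg x * (ρhyp γ : Matrix (Fin 4) (Fin 4) ℝ) * CdegInv x)
          (𝓝[>] 0) (𝓝 (ρred γ : Matrix (Fin 4) (Fin 4) ℝ)) := by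
  have hpos : 𝓝[>] (0 : ℝ) ≤ 𝓝[≠] 0 := nhdsWithin_mono _ fun x hx => ne_of_gt hx
  have hcusp := (tendsto_Cdeg_mul_Mcusp_mul_CdegInv 1 0).mono_left hpos
  refine ⟨fun x hx => ⟨det_Cdeg hx.ne', Cdeg_mul_CdegInv hx.ne',
    Cdeg_mul_Omega_mul_CdegInv hx.ne'⟩, hcusp, fun ρhyp ρred hρa hρab hσa hσab => ?_⟩
  let S := conjLimitSubmonoid (𝓝[>] (0 : ℝ))
    (eventually_mem_nhdsWithin.mono fun x hx =>
      ⟨Cdeg_mul_CdegInv hx.ne', CdegInv_mul_Cdeg hx.ne'⟩)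
    (SpecialLinearGroup.coeMonoidHom.comp ρhyp) (SpecialLinearGroup.coeMonoidHom.comp ρred)
  have ha : ga ∈ S := by
    simp only [S, mem_conjLimitSubmonoid, MonoidHom.comp_apply,
      SpecialLinearGroup.coeMonoidHom_apply, hρa, hσa]
    exact tendsto_const_nhds.congr' <| eventually_mem_nhdsWithin.mono
      fun x hx => (Cdeg_mul_Omega_mul_CdegInv (ne_of_gt hx)).symm
  have hab : ga ^ 2 * gb ∈ S := by
    simpa only [S, mem_conjLimitSubmonoid, MonoidHom.comp_apply,
      SpecialLinearGroup.coeMonoidHom_apply, hρab, hσab] using hcusp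
  have hb : gb ∈ S := by
    have hgb : ga * (ga ^ 2 * gb) = gb := by
      rw [← mul_assoc, ← pow_succ', TurnoverGroup.ga_pow_three, one_mul]
    exact hgb ▸ S.mul_mem ha hab
  exact fun γ => mem_conjLimitSubmonoid.mp (TurnoverGroup.mem_of_ga_mem_of_gb_mem ha hb γ)
end
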